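/- arXiv:1303.0010 — 8 statements merged into one kernel-verified Lean document; each statement's English description precedes it below -/
import Mathlib

section
/- Let n ≥ 1, let T be an n-dimensional simplex in ℝ^n with vertices v_0, v_1, ..., v_n (all with nonnegative coordinates), and let X_1, ..., X_n be positive reals. Then the integral over T of n! · X_1⋯X_n / (1 + a·X)^{n+1} da equals n! · Vol(T) · X_1⋯X_n / ∏_{i=0}^{n} (1 + v_i · X), where a·X denotes a_1 X_1 + ⋯ + a_n X_n and Vol(T) is the Lebesgue measure of T. -/
/-!
Parametrize `T` by the corner simplex `S = {y ≥ 0, ∑ y ≤ 1}` through `y ↦ ∑ᵢ λᵢ(y) vᵢ`, where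
`λ(y) = (1 - ∑ y, y)` are barycentric coordinates. This map is affine and injective, and its
Jacobian is the constant `n! Vol(T)`. Since `a ↦ 1 + a·X` is affine, the integrand pulls back to
`(λ(y)·c)^-(n+1)` with `cᵢ = 1 + vᵢ·X`, so everything reduces to the Feynman-parameter identity
`∫_S (λ(y)·c)^-(n+1) dy = 1 / (n! ∏ cᵢ)` for positive `c`. This is proved by induction on `n`:
integrating out the first coordinate leaves an elementary one-variable integral, which turns the
`(n+1)`-dimensional integral into a divided difference of two `n`-dimensional ones.
-/

open MeasureTheory Set

noncomputable section

namespace Simplex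

variable {n : ℕ}

def baryCoords (x : Fin n → ℝ) : Fin (n + 1) → ℝ := Fin.cons (1 - ∑ i, x i) x

def cornerSimplex (n : ℕ) : Set (Fin n → ℝ) := {x | (∀ i, 0 ≤ x i) ∧ ∑ i, x i ≤ 1}

theorem sum_baryCoords (x : Fin n → ℝ) : ∑ i, baryCoords x i = 1 := by
  simp [baryCoords, Fin.sum_cons]

@[fun_prop]
theorem continuous_baryCoords : Continuous (baryCoords (n := n)) :=
  Continuous.finCons (by fun_prop) continuous_id

theorem baryCoords_mem_stdSimplex_iff {x : Fin n → ℝ} :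
    baryCoords x ∈ stdSimplex ℝ (Fin (n + 1)) ↔ x ∈ cornerSimplex n := by
  simp [stdSimplex, cornerSimplex, Fin.forall_fin_succ, baryCoords, and_comm]

theorem image_baryCoords_cornerSimplex :
    baryCoords '' cornerSimplex n = stdSimplex ℝ (Fin (n + 1)) := by
  refine Subset.antisymm (image_subset_iff.2 fun x => baryCoords_mem_stdSimplex_iff.2) ?_
  intro w hw
  have hw0 : w 0 = 1 - ∑ i, Fin.tail w i := by
    rw [← hw.2, Fin.sum_univ_succ]; simp [Fin.tail]
  have hbary : baryCoords (Fin.tail w) = w := by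
    rw [baryCoords, ← hw0, Fin.cons_self_tail]
  exact ⟨Fin.tail w, baryCoords_mem_stdSimplex_iff.1 (hbary ▸ hw), hbary⟩

theorem isCompact_cornerSimplex : IsCompact (cornerSimplex n) := by
  have : Fin.tail '' stdSimplex ℝ (Fin (n + 1)) = cornerSimplex n := by
    rw [← image_baryCoords_cornerSimplex, image_image]
    simp [baryCoords, Fin.tail_cons]
  exact this ▸ (isCompact_stdSimplex ℝ _).image (by fun_prop)

theorem le_dotProduct_of_mem_stdSimplex {ι : Type*} [Fintype ι] {w c : ι → ℝ} {a : ℝ}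
    (hw : w ∈ stdSimplex ℝ ι) (hc : ∀ i, a ≤ c i) : a ≤ w ⬝ᵥ c :=
  calc a = ∑ i, w i * a := by rw [← Finset.sum_mul, hw.2, one_mul]
    _ ≤ w ⬝ᵥ c := Finset.sum_le_sum fun i _ => mul_le_mul_of_nonneg_left (hc i) (hw.1 i)

theorem measurableSet_cornerSimplex : MeasurableSet (cornerSimplex n) :=
  isCompact_cornerSimplex.measurableSet

theorem exists_pos_forall_le {ι : Type*} [Finite ι] [Nonempty ι] {c : ι → ℝ}
    (hc : ∀ i, 0 < c i) : ∃ a > 0, ∀ i, a ≤ c i :=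
  let ⟨i₀, hi₀⟩ := Finite.exists_min c
  ⟨c i₀, hc i₀, hi₀⟩

theorem le_baryCoords_dotProduct {c : Fin (n + 1) → ℝ} {a : ℝ} (hc : ∀ i, a ≤ c i)
    {x : Fin n → ℝ} (hx : x ∈ cornerSimplex n) : a ≤ baryCoords x ⬝ᵥ c :=
  le_dotProduct_of_mem_stdSimplex (baryCoords_mem_stdSimplex_iff.2 hx) hc

theorem baryCoords_dotProduct_pos {c : Fin (n + 1) → ℝ} (hc : ∀ i, 0 < c i)
    {x : Fin n → ℝ} (hx : x ∈ cornerSimplex n) : 0 < baryCoords x ⬝ᵥ c :=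
  let ⟨_, ha, hac⟩ := exists_pos_forall_le hc
  ha.trans_le (le_baryCoords_dotProduct hac hx)

theorem integrableOn_cornerSimplex_inv_pow {c : Fin (n + 1) → ℝ} (hc : ∀ i, 0 < c i) (m : ℕ) :
    IntegrableOn (fun x => ((baryCoords x ⬝ᵥ c) ^ m)⁻¹) (cornerSimplex n) :=
  ContinuousOn.integrableOn_compact isCompact_cornerSimplex <|
    ContinuousOn.inv₀ (by fun_prop) fun _ hx =>
      (pow_pos (baryCoords_dotProduct_pos hc hx) m).ne'

theorem continuousAt_integral_cornerSimplex_inv_pow {c : Fin (n + 1) → ℝ} (hc : ∀ i, 0 < c i)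
    (m : ℕ) :
    ContinuousAt (fun c => ∫ x in cornerSimplex n, ((baryCoords x ⬝ᵥ c) ^ m)⁻¹) c := by
  obtain ⟨a, ha, hac⟩ := exists_pos_forall_le hc
  have hnear : ∀ᶠ c' in nhds c, ∀ i, a / 2 ≤ c' i :=
    Filter.eventually_all.2 fun i => (continuousAt_const.eventually_lt
      (continuous_apply i).continuousAt (by linarith [hac i])).mono fun _ h => h.le
  have : IsFiniteMeasure (volume.restrict (cornerSimplex n)) :=
    isFiniteMeasure_restrict.2 isCompact_cornerSimplex.measure_ne_top
  refine continuousAt_of_dominated (bound := fun _ => ((a / 2) ^ m)⁻¹) ?_ ?_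
    (integrable_const _) ?_
  · exact .of_forall fun c' => ((continuous_baryCoords.dotProduct continuous_const).pow m
      |>.measurable.inv.aestronglyMeasurable)
  · filter_upwards [hnear] with c' hc'
    filter_upwards [ae_restrict_mem measurableSet_cornerSimplex] with x hx
    have hle := le_baryCoords_dotProduct hc' hx
    rw [norm_inv, norm_pow, Real.norm_of_nonneg (by linarith)]
    gcongr
  · filter_upwards [ae_restrict_mem measurableSet_cornerSimplex] with x hx
    exact ContinuousAt.inv₀ (by fun_prop) (pow_pos (baryCoords_dotProduct_pos hc hx) m).ne'

theorem cons_mem_cornerSimplex_iff {t : ℝ} {y : Fin n → ℝ} :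
    (Fin.cons t y : Fin (n + 1) → ℝ) ∈ cornerSimplex (n + 1) ↔
      y ∈ cornerSimplex n ∧ t ∈ Icc 0 (1 - ∑ i, y i) := by
  simp only [cornerSimplex, mem_ofPred_eq, Fin.forall_fin_succ, Fin.cons_zero, Fin.cons_succ,
    Fin.sum_cons, Set.mem_Icc]
  constructor
  · rintro ⟨⟨ht, hy⟩, hsum⟩
    exact ⟨⟨hy, by linarith⟩, ht, by linarith⟩
  · rintro ⟨⟨hy, -⟩, ht, hsum⟩
    exact ⟨⟨ht, hy⟩, by linarith⟩

theorem integral_cornerSimplex_succ {E : Type*} [NormedAddCommGroup E] [NormedSpace ℝ E]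
    {f : (Fin (n + 1) → ℝ) → E} (hf : IntegrableOn f (cornerSimplex (n + 1))) :
    ∫ x in cornerSimplex (n + 1), f x =
      ∫ y in cornerSimplex n, ∫ t in (0 : ℝ)..1 - ∑ i, y i, f (Fin.cons t y) := by
  let e := MeasurableEquiv.piFinSuccAbove (fun _ : Fin (n + 1) => ℝ) 0
  have he : MeasurePreserving e volume (volume.prod volume) := by
    rw [← Measure.volume_eq_prod]; exact volume_preserving_piFinSuccAbove _ 0
  have hslice : ∀ y t, (cornerSimplex (n + 1)).indicator f (e.symm (t, y)) =
      (cornerSimplex n).indicator (fun y => (Icc 0 (1 - ∑ i, y i)).indicator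
        (fun t => f (Fin.cons t y)) t) y := by
    intro y t
    rw [show e.symm (t, y) = Fin.cons t y from Fin.insertNth_zero' t y]
    classical
    simp only [Set.indicator_apply, cons_mem_cornerSimplex_iff, ite_and]
  have hinner : ∀ y, ∫ t, (cornerSimplex n).indicator (fun y => (Icc 0 (1 - ∑ i, y i)).indicator
      (fun t => f (Fin.cons t y)) t) y = (cornerSimplex n).indicator
        (fun y => ∫ t in (0 : ℝ)..1 - ∑ i, y i, f (Fin.cons t y)) y := by
    intro y
    by_cases hy : y ∈ cornerSimplex n
    · simp only [indicator_of_mem hy]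
      rw [integral_indicator measurableSet_Icc, integral_Icc_eq_integral_Ioc,
        intervalIntegral.integral_of_le (by linarith [hy.2])]
    · simp [indicator_of_notMem hy]
  have hint : Integrable (fun p => (cornerSimplex (n + 1)).indicator f (e.symm p))
      (volume.prod volume) :=
    (he.symm.integrable_comp_emb e.symm.measurableEmbedding).2
      ((integrable_indicator_iff measurableSet_cornerSimplex).2 hf)
  rw [← integral_indicator measurableSet_cornerSimplex,
    ← he.symm.integral_comp' (g := (cornerSimplex (n + 1)).indicator f), integral_prod_symm _ hint]
  simp only [hslice, hinner]
  exact integral_indicator measurableSet_cornerSimplex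

theorem integral_inv_pow_add_mul (m : ℕ) {A B L : ℝ} (hA : 0 < A) (hAL : 0 < A + B * L)
    (hB : B ≠ 0) :
    ∫ t in (0 : ℝ)..L, ((A + B * t) ^ (m + 2))⁻¹ =
      ((m + 1) * B)⁻¹ * ((A ^ (m + 1))⁻¹ - ((A + B * L) ^ (m + 1))⁻¹) := by
  have h0 : (0 : ℝ) ∉ uIcc A (A + B * L) := fun h => by
    rcases Set.mem_uIcc.1 h with h | h <;> linarith [h.1, h.2]
  have hz : ∀ (k : ℕ) (x : ℝ), (x ^ k)⁻¹ = x ^ (-(k : ℤ)) := fun k x => by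
    rw [zpow_neg, zpow_natCast]
  simp_rw [hz]
  rw [intervalIntegral.integral_comp_add_mul (fun x => x ^ (-((m + 2 : ℕ) : ℤ))) hB, mul_zero,
    add_zero, integral_zpow (Or.inr ⟨by omega, h0⟩),
    show -((m + 2 : ℕ) : ℤ) + 1 = -((m + 1 : ℕ) : ℤ) by push_cast; ring]
  have hm : (m : ℝ) + 1 ≠ 0 := by positivity
  push_cast
  rw [smul_eq_mul, show -((m : ℝ) + 2) + 1 = -((m : ℝ) + 1) by ring]
  field_simp
  ring

theorem baryCoords_cons_dotProduct (t : ℝ) (y : Fin n → ℝ) (a b : ℝ) (r : Fin n → ℝ) :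
    baryCoords (Fin.cons t y : Fin (n + 1) → ℝ) ⬝ᵥ Fin.cons a (Fin.cons b r) =
      baryCoords y ⬝ᵥ Fin.cons a r + (b - a) * t := by
  simp only [baryCoords, dotProduct, Fin.sum_univ_succ, Fin.cons_zero, Fin.cons_succ]
  ring

theorem baryCoords_dotProduct_cons_add (y : Fin n → ℝ) (a b : ℝ) (r : Fin n → ℝ) :
    baryCoords y ⬝ᵥ Fin.cons a r + (b - a) * (1 - ∑ i, y i) = baryCoords y ⬝ᵥ Fin.cons b r := by
  simp only [baryCoords, dotProduct, Fin.sum_univ_succ, Fin.cons_zero, Fin.cons_succ]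
  ring

theorem integral_cornerSimplex_succ_inv_pow {a b : ℝ} {r : Fin n → ℝ} (ha : 0 < a) (hb : 0 < b)
    (hr : ∀ i, 0 < r i) (hab : a ≠ b) :
    ∫ x in cornerSimplex (n + 1), ((baryCoords x ⬝ᵥ Fin.cons a (Fin.cons b r)) ^ (n + 2))⁻¹ =
      ((n + 1) * (b - a))⁻¹ *
        ((∫ y in cornerSimplex n, ((baryCoords y ⬝ᵥ Fin.cons a r) ^ (n + 1))⁻¹) -
          ∫ y in cornerSimplex n, ((baryCoords y ⬝ᵥ Fin.cons b r) ^ (n + 1))⁻¹) := by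
  have hpos : ∀ {c : ℝ}, 0 < c → ∀ i, 0 < (Fin.cons c r : Fin (n + 1) → ℝ) i := fun hc =>
    Fin.cases hc hr
  rw [integral_cornerSimplex_succ (integrableOn_cornerSimplex_inv_pow
      (Fin.cases ha (hpos hb)) _), ← integral_sub (integrableOn_cornerSimplex_inv_pow (hpos ha) _)
      (integrableOn_cornerSimplex_inv_pow (hpos hb) _), ← integral_const_mul]
  refine setIntegral_congr_fun measurableSet_cornerSimplex fun y hy => ?_
  simp only [baryCoords_cons_dotProduct]
  rw [integral_inv_pow_add_mul n (baryCoords_dotProduct_pos (hpos ha) hy) ?_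
    (sub_ne_zero.2 hab.symm), baryCoords_dotProduct_cons_add]
  · rw [baryCoords_dotProduct_cons_add]; exact baryCoords_dotProduct_pos (hpos hb) hy

theorem integral_cornerSimplex_inv_pow {c : Fin (n + 1) → ℝ} (hc : ∀ i, 0 < c i) :
    ∫ x in cornerSimplex n, ((baryCoords x ⬝ᵥ c) ^ (n + 1))⁻¹ = (n.factorial * ∏ i, c i)⁻¹ := by
  induction n with
  | zero =>
    have hS : cornerSimplex 0 = univ := by ext x; simp [cornerSimplex]
    simp [hS, baryCoords, dotProduct, Measure.real, volume_pi]
  | succ n ih =>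
    induction c using Fin.consCases with | cons a c => ?_
    induction c using Fin.consCases with | cons b r => ?_
    have ha : 0 < a := by simpa using hc 0
    have hb : 0 < b := by simpa using hc 1
    have hr : ∀ i, 0 < r i := fun i => by simpa using hc i.succ.succ
    have hne : ∀ {b'}, 0 < b' → a ≠ b' →
        ∫ x in cornerSimplex (n + 1), ((baryCoords x ⬝ᵥ Fin.cons a (Fin.cons b' r)) ^ (n + 2))⁻¹ =
          ((n + 1).factorial * ∏ i, (Fin.cons a (Fin.cons b' r) : Fin (n + 2) → ℝ) i)⁻¹ := by
      intro b' hb' hab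
      rw [integral_cornerSimplex_succ_inv_pow ha hb' hr hab, ih (Fin.cases ha hr),
        ih (Fin.cases hb' hr)]
      have : 0 < ∏ i, r i := Finset.prod_pos fun i _ => hr i
      simp only [Fin.prod_cons, Nat.factorial_succ]
      push_cast
      field_simp [sub_ne_zero.2 hab.symm]
    rcases ne_or_eq a b with hab | rfl
    · exact hne hb hab
    -- The recursion divides by `b - a`; for `b = a` both sides are continuous in `b`.
    have hcons : Continuous fun b' => (Fin.cons a (Fin.cons b' r) : Fin (n + 2) → ℝ) := by
      fun_prop
    have hF : ContinuousAt (fun b' => ∫ x in cornerSimplex (n + 1),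
        ((baryCoords x ⬝ᵥ Fin.cons a (Fin.cons b' r)) ^ (n + 2))⁻¹) a :=
      ContinuousAt.comp (g := fun c => ∫ x in cornerSimplex (n + 1),
        ((baryCoords x ⬝ᵥ c) ^ (n + 2))⁻¹) (continuousAt_integral_cornerSimplex_inv_pow hc _)
        hcons.continuousAt
    have hG : ContinuousAt (fun b' =>
        ((n + 1).factorial * ∏ i, (Fin.cons a (Fin.cons b' r) : Fin (n + 2) → ℝ) i)⁻¹ : ℝ → ℝ)
        a := by
      have : 0 < ∏ i, r i := Finset.prod_pos fun i _ => hr i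
      simp only [Fin.prod_cons]
      exact ContinuousAt.inv₀ (by fun_prop) (by positivity)
    refine ((hF.eventuallyEq_nhds_iff_eventuallyEq_nhdsNE hG).1 ?_).eq_of_nhds
    filter_upwards [self_mem_nhdsWithin, nhdsWithin_le_nhds (lt_mem_nhds ha)] with b' hb'a hb'
    exact hne hb' (Ne.symm hb'a)

theorem volume_real_cornerSimplex : volume.real (cornerSimplex n) = (n.factorial : ℝ)⁻¹ := by
  have h := integral_cornerSimplex_inv_pow (n := n) (c := 1) fun _ => one_pos
  simpa [dotProduct_one, sum_baryCoords] using h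

section SimplexMap

variable {E : Type*} [AddCommGroup E] [Module ℝ E] (v : Fin (n + 1) → E)

def simplexMap (y : Fin n → ℝ) : E := ∑ i, baryCoords y i • v i

theorem image_simplexMap_cornerSimplex :
    simplexMap v '' cornerSimplex n = convexHull ℝ (range v) := by
  classical
  have hv : v = Fintype.linearCombination ℝ v ∘ fun i => Pi.single i 1 := by
    ext1 i; simp [Fintype.linearCombination_apply_single]
  rw [hv, range_comp, ← LinearMap.image_convexHull, convexHull_rangle_single_eq_stdSimplex,
    ← image_baryCoords_cornerSimplex, image_image, ← hv]
  rfl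

theorem simplexMap_injective (hv : AffineIndependent ℝ v) : Function.Injective (simplexMap v) := by
  intro y z h
  have hbary := (affineIndependent_iff_eq_of_fintype_affineCombination_eq ℝ v).1 hv _ _
    (sum_baryCoords y) (sum_baryCoords z) (by
      rwa [Finset.affineCombination_eq_linear_combination _ _ _ (sum_baryCoords y),
        Finset.affineCombination_eq_linear_combination _ _ _ (sum_baryCoords z)])
  simpa [baryCoords] using congrArg Fin.tail hbary

theorem simplexMap_eq_add (y : Fin n → ℝ) :
    simplexMap v y = v 0 + Fintype.linearCombination ℝ (fun i => v i.succ - v 0) y := by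
  simp only [simplexMap, baryCoords, Fintype.linearCombination_apply, Fin.sum_univ_succ,
    Fin.cons_zero, Fin.cons_succ, smul_sub, Finset.sum_sub_distrib, sub_smul, Finset.sum_smul,
    one_smul]
  abel

end SimplexMap

theorem one_add_simplexMap_dotProduct {ι : Type*} [Fintype ι] (v : Fin (n + 1) → ι → ℝ)
    (X : ι → ℝ) (y : Fin n → ℝ) :
    1 + simplexMap v y ⬝ᵥ X = baryCoords y ⬝ᵥ fun i => 1 + v i ⬝ᵥ X := by
  rw [simplexMap, sum_dotProduct]
  simp only [smul_dotProduct, smul_eq_mul]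
  simp only [dotProduct, mul_add, mul_one, Finset.sum_add_distrib, sum_baryCoords]

theorem integral_convexHull_eq_abs_det_smul {F : Type*} [NormedAddCommGroup F]
    [NormedSpace ℝ F] {v : Fin (n + 1) → Fin n → ℝ} (hv : AffineIndependent ℝ v)
    (g : (Fin n → ℝ) → F) :
    ∫ a in convexHull ℝ (range v), g a =
      |LinearMap.det (Fintype.linearCombination ℝ fun i : Fin n => v i.succ - v 0)| •
        ∫ y in cornerSimplex n, g (simplexMap v y) := by
  set M := Fintype.linearCombination ℝ fun i : Fin n => v i.succ - v 0
  have hM : ∀ y ∈ cornerSimplex n,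
      HasFDerivWithinAt (simplexMap v) M.toContinuousLinearMap (cornerSimplex n) y := fun y _ => by
    rw [show simplexMap v = fun y => v 0 + M y from funext (simplexMap_eq_add v)]
    exact (M.toContinuousLinearMap.hasFDerivAt.const_add _).hasFDerivWithinAt
  rw [← image_simplexMap_cornerSimplex, integral_image_eq_integral_abs_det_fderiv_smul volume
    measurableSet_cornerSimplex hM (simplexMap_injective v hv).injOn, integral_smul,
    LinearMap.det_toContinuousLinearMap]

theorem integral_convexHull_eq {F : Type*} [NormedAddCommGroup F] [NormedSpace ℝ F]
    {v : Fin (n + 1) → Fin n → ℝ} (hv : AffineIndependent ℝ v) (g : (Fin n → ℝ) → F) :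
    ∫ a in convexHull ℝ (range v), g a =
      (n.factorial * volume.real (convexHull ℝ (range v))) •
        ∫ y in cornerSimplex n, g (simplexMap v y) := by
  have hvol := integral_convexHull_eq_abs_det_smul hv fun _ => (1 : ℝ)
  simp only [integral_const, smul_eq_mul, mul_one, measureReal_restrict_apply_univ,
    volume_real_cornerSimplex] at hvol
  rw [hvol, integral_convexHull_eq_abs_det_smul hv]
  congr 1
  field_simp

end Simplex

open Simplex in
theorem simplex_segre_integral_general (n : ℕ)
    (v : Fin (n + 1) → Fin n → ℝ) (hv : ∀ i j, 0 ≤ v i j)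
    (hind : AffineIndependent ℝ v)
    (X : Fin n → ℝ) (hX : ∀ i, 0 < X i) :
    ∫ a in convexHull ℝ (Set.range v),
      (Nat.factorial n : ℝ) * (∏ i, X i) / (1 + ∑ i, a i * X i) ^ (n + 1) ∂volume
    = (Nat.factorial n : ℝ) * (volume (convexHull ℝ (Set.range v))).toReal *
        (∏ i, X i) / ∏ i, (1 + ∑ j, v i j * X j) := by
  set c : Fin (n + 1) → ℝ := fun i => 1 + ∑ j, v i j * X j
  have hc : ∀ i, 0 < c i := fun i =>
    add_pos_of_pos_of_nonneg one_pos (Finset.sum_nonneg fun j _ => mul_nonneg (hv i j) (hX j).le)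
  have hpull : ∀ y, 1 + ∑ j, simplexMap v y j * X j = baryCoords y ⬝ᵥ c :=
    one_add_simplexMap_dotProduct v X
  rw [integral_convexHull_eq hind]
  simp_rw [hpull, div_eq_mul_inv]
  rw [integral_const_mul, integral_cornerSimplex_inv_pow hc, smul_eq_mul, measureReal_def]
  field_simp

theorem simplex_segre_integral (n : ℕ) (hn : 0 < n)
    (v : Fin (n + 1) → Fin n → ℝ) (hv : ∀ i j, 0 ≤ v i j)
    (hind : AffineIndependent ℝ v)
    (X : Fin n → ℝ) (hX : ∀ i, 0 < X i) :
    ∫ a in convexHull ℝ (Set.range v),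
      (Nat.factorial n : ℝ) * (∏ i, X i) / (1 + ∑ i, a i * X i) ^ (n + 1) ∂volume
    = (Nat.factorial n : ℝ) * (volume (convexHull ℝ (Set.range v))).toReal *
        (∏ i, X i) / ∏ i, (1 + ∑ j, v i j * X j) :=
  simplex_segre_integral_general n v hv hind X hX
end
end

section
/- Let n > 0, positive reals A and B. Then ∫_0^1 n! t^{n-1} / (A + Bt)^{n+1} dt = (n-1)! / (A (A+B)^n). -/
/-!
Since `d/dt (t / (A + B t)) = A / (A + B t)²`, the integrand is `(n-1)!/A` times the derivative
of `(t / (A + B t))ⁿ`, which vanishes at `0` and equals `(A + B)⁻ⁿ` at `1`.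
-/

theorem hasDerivAt_div_linear {A B t : ℝ} (h : A + B * t ≠ 0) :
    HasDerivAt (fun t => t / (A + B * t)) (A / (A + B * t) ^ 2) t := by
  have hlin : HasDerivAt (fun t => A + B * t) B t := by
    simpa using ((hasDerivAt_id t).const_mul B).const_add A
  refine ((hasDerivAt_id' t).fun_div hlin h).congr_deriv ?_
  ring

theorem hasDerivAt_div_linear_pow {A B t : ℝ} (n : ℕ) (h : A + B * t ≠ 0) :
    HasDerivAt (fun t => (t / (A + B * t)) ^ n)
      (n * A * t ^ (n - 1) / (A + B * t) ^ (n + 1)) t := by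
  refine ((hasDerivAt_div_linear h).fun_pow n).congr_deriv ?_
  rcases n with _ | m
  · simp
  · rw [Nat.add_sub_cancel, div_pow]
    field_simp
    ring

theorem interval_power_integral (n : ℕ) (hn : 0 < n) (A B : ℝ) (hA : 0 < A) (hB : 0 < B) :
    ∫ t in (0:ℝ)..1, (Nat.factorial n : ℝ) * t ^ (n - 1) / (A + B * t) ^ (n + 1)
    = (Nat.factorial (n - 1) : ℝ) / (A * (A + B) ^ n) := by
  have hpos : ∀ t ∈ Set.uIcc (0:ℝ) 1, 0 < A + B * t := by
    intro t ht
    rw [Set.uIcc_of_le zero_le_one] at ht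
    nlinarith [ht.1]
  have hfac : (n * (n - 1).factorial : ℝ) = n.factorial := mod_cast Nat.mul_factorial_pred hn.ne'
  have hderiv : ∀ t ∈ Set.uIcc (0:ℝ) 1,
      HasDerivAt (fun t => (n - 1).factorial / A * (t / (A + B * t)) ^ n)
        (n.factorial * t ^ (n - 1) / (A + B * t) ^ (n + 1)) t := by
    intro t ht
    refine ((hasDerivAt_div_linear_pow n (hpos t ht).ne').const_mul
      ((n - 1).factorial / A)).congr_deriv ?_
    rw [← hfac]
    field_simp
  have hint : IntervalIntegrable
      (fun t : ℝ => n.factorial * t ^ (n - 1) / (A + B * t) ^ (n + 1)) MeasureTheory.volume 0 1 :=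
    (ContinuousOn.div (by fun_prop) (by fun_prop) fun t ht =>
      pow_ne_zero _ (hpos t ht).ne').intervalIntegrable
  rw [intervalIntegral.integral_eq_sub_of_hasDerivAt hderiv hint]
  simp only [mul_one, one_div, inv_pow, mul_zero, add_zero, zero_div, zero_pow hn.ne', sub_zero]
  field_simp
end

section
/- Let n ≥ 2 and let X_1, ..., X_n be indeterminates (or positive reals). For j = 1,...,n, let f_j · X = (∑_{i=1}^n X_i) − X_j. Then ∑_{J ⊆ {1,...,n}, |J| ≥ 2} (|J| − 1) · (∏_{j∈J} X_j) / (∏_{j∈J} (1 + f_j·X)) = 1 − (1 + X_1 + ⋯ + X_n)^{n−1} / ∏_{j=1}^n (1 + f_j·X). -/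
/-!
With `c = 1 + ∑ i, X i` and `a j = X j / (c - X j)` one has `1 + a j = c / (c - X j)`, and
each summand is `(#J - 1) * ∏ j ∈ J, a j`. Summing over all subsets instead, `∑ ∏_J a = ∏ (1 + a)`
and, by counting pairs `j ∈ J`, `∑ #J ∏_J a = ∑ j, a j * ∏ i ≠ j, (1 + a i)`; both are explicit
multiples of `c ^ (n - 1) / ∏ (c - X j)`. The subsets of size at most one contribute exactly `-1`.
-/

open Finset

section CommRing

variable {ι R : Type*} [CommRing R]

lemma sum_powerset_ite_mem_prod [DecidableEq ι] {j : ι} {t : Finset ι} (hj : j ∉ t) (a : ι → R) :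
    ∑ J ∈ (insert j t).powerset, (if j ∈ J then ∏ i ∈ J, a i else 0)
      = a j * ∏ i ∈ t, (1 + a i) := by
  rw [sum_powerset_insert hj, prod_one_add, mul_sum]
  have hJ : ∀ J ∈ t.powerset, j ∉ J := fun J hJ hjJ => hj (mem_powerset.1 hJ hjJ)
  simp only [mem_insert_self, if_true]
  rw [sum_eq_zero fun J hJ' => if_neg (hJ J hJ'), zero_add]
  exact sum_congr rfl fun J hJ' => prod_insert (hJ J hJ')

lemma sum_powerset_card_mul_prod [DecidableEq ι] (s : Finset ι) (a : ι → R) :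
    ∑ J ∈ s.powerset, (#J : R) * ∏ i ∈ J, a i = ∑ j ∈ s, a j * ∏ i ∈ s.erase j, (1 + a i) :=
  calc ∑ J ∈ s.powerset, (#J : R) * ∏ i ∈ J, a i
      = ∑ J ∈ s.powerset, ∑ j ∈ s, if j ∈ J then ∏ i ∈ J, a i else 0 :=
        sum_congr rfl fun J hJ => by
          rw [sum_ite_mem, inter_eq_right.2 (mem_powerset.1 hJ), sum_const, nsmul_eq_mul]
    _ = ∑ j ∈ s, a j * ∏ i ∈ s.erase j, (1 + a i) := by
        rw [sum_comm]
        refine sum_congr rfl fun j hj => ?_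
        rw [← sum_powerset_ite_mem_prod (notMem_erase j s), insert_erase hj]

lemma sum_powerset_filter_two_le_card (s : Finset ι) (a : ι → R) :
    ∑ J ∈ s.powerset with 2 ≤ #J, ((#J : R) - 1) * ∏ i ∈ J, a i
      = ∑ J ∈ s.powerset, ((#J : R) - 1) * ∏ i ∈ J, a i + 1 := by
  have small : ∑ J ∈ s.powerset with ¬ 2 ≤ #J, ((#J : R) - 1) * ∏ i ∈ J, a i = -1 := by
    rw [sum_eq_single_of_mem ∅ (by simp)]
    · simp
    intro J hJ hJ0
    have : #J = 1 := by
      have := (mem_filter.1 hJ).2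
      have := card_pos.2 (nonempty_iff_ne_empty.2 hJ0)
      omega
    simp [this]
  rw [← sum_filter_add_sum_filter_not s.powerset (2 ≤ #·), small, neg_add_cancel_right]

end CommRing

lemma sum_powerset_card_sub_one_mul_prod_div {ι F : Type*} [DecidableEq ι] [Field F]
    (s : Finset ι) (c : F) (X : ι → F) (hX : ∀ j ∈ s, c - X j ≠ 0) :
    ∑ J ∈ s.powerset, ((#J : F) - 1) * ∏ j ∈ J, X j / (c - X j)
      = ((∑ j ∈ s, X j) * c ^ (#s - 1) - c ^ #s) / ∏ j ∈ s, (c - X j) := by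
  have one_add_div_sub : ∀ j ∈ s, 1 + X j / (c - X j) = c / (c - X j) := fun j hj => by
    field_simp [hX j hj]; ring
  have term : ∀ j ∈ s, X j / (c - X j) * ∏ i ∈ s.erase j, (1 + X i / (c - X i))
      = X j * c ^ (#s - 1) / ∏ i ∈ s, (c - X i) := fun j hj => by
    rw [prod_congr rfl fun i hi => one_add_div_sub i (mem_of_mem_erase hi), prod_div_distrib,
      prod_const, card_erase_of_mem hj, ← mul_prod_erase s _ hj]
    rw [div_mul_div_comm, mul_comm (c - X j), mul_comm (X j)]
  simp_rw [sub_mul, one_mul]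
  rw [sum_sub_distrib, sum_powerset_card_mul_prod, ← prod_one_add, sum_congr rfl term,
    prod_congr rfl one_add_div_sub, prod_div_distrib, prod_const, ← sum_div, ← sum_mul, sub_div]

theorem rational_identity_general (n : ℕ) (F : Type*) [Field F]
    (X : Fin n → F) (hden : ∀ j, (1 + (∑ i, X i) - X j) ≠ 0) :
    ∑ J ∈ Finset.univ.powerset.filter (fun J : Finset (Fin n) => 2 ≤ J.card),
      ((J.card : F) - 1) * (∏ j ∈ J, X j) / (∏ j ∈ J, (1 + (∑ i, X i) - X j))
    = 1 - (1 + ∑ i, X i) ^ (n - 1) / ∏ j, (1 + (∑ i, X i) - X j) := by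
  obtain rfl | hn := n.eq_zero_or_pos
  · simp [filter_singleton]
  set c := 1 + ∑ i, X i
  simp_rw [mul_div_assoc, ← prod_div_distrib]
  rw [sum_powerset_filter_two_le_card,
    sum_powerset_card_sub_one_mul_prod_div _ c X fun j _ => hden j, card_univ, Fintype.card_fin]
  have hpow : c ^ n = c * c ^ (n - 1) := by rw [← pow_succ', Nat.sub_add_cancel hn]
  rw [hpow]
  field_simp
  ring

theorem rational_identity (n : ℕ) (hn : 2 ≤ n) (F : Type*) [Field F]
    (X : Fin n → F) (hden : ∀ j, (1 + (∑ i, X i) - X j) ≠ 0) :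
    ∑ J ∈ Finset.univ.powerset.filter (fun J : Finset (Fin n) => 2 ≤ J.card),
      ((J.card : F) - 1) * (∏ j ∈ J, X j) / (∏ j ∈ J, (1 + (∑ i, X i) - X j))
    = 1 - (1 + ∑ i, X i) ^ (n - 1) / ∏ j, (1 + (∑ i, X i) - X j) :=
  rational_identity_general n F X hden
end

section
/- For real numbers m > 0 and X_1, X_2 > 0, the integral over the triangle T with vertices (0,0), (0,m), (m,0) of 2 X_1 X_2 / (1 + a_1 X_1 + a_2 X_2)^3 da_1 da_2 equals m^2 X_1 X_2 / ((1 + m X_1)(1 + m X_2)). -/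
/-!
By Fubini the integral is `∫₀ᵐ ∫₀^{m-x} 2X₁X₂/(1 + xX₁ + yX₂)³ dy dx`. The inner integral is
`X₁ ((1 + X₁x)⁻² - (1 + mX₂ + (X₁ - X₂)x)⁻²)`, a difference of inverse squares of affine functions
of `x`, and `∫₀ᵗ (a + bx)⁻² dx = t / (a (a + bt))`. The antiderivative `x / (a (a + bx))` behind
this formula does not divide by `b`, so the case `X₁ = X₂` needs no separate treatment.
-/

open MeasureTheory Set intervalIntegral

theorem setIntegral_prod_eq_integral_setIntegral_preimage {α β : Type*} [MeasurableSpace α]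
    [MeasurableSpace β] {μ : Measure α} {ν : Measure β} [SFinite ν] [SFinite μ]
    {f : α × β → ℝ} {S : Set (α × β)} (hS : MeasurableSet S) (hf : IntegrableOn f S (μ.prod ν)) :
    ∫ p in S, f p ∂μ.prod ν = ∫ x, ∫ y in Prod.mk x ⁻¹' S, f (x, y) ∂ν ∂μ := by
  rw [← MeasureTheory.integral_indicator hS, integral_prod _ (hf.integrable_indicator hS)]
  congr 1 with x
  rw [← MeasureTheory.integral_indicator (measurable_prodMk_left hS)]
  rfl

section Affine

variable {a b t : ℝ}

theorem affine_pos_of_mem_uIcc (ha : 0 < a) (hat : 0 < a + b * t) {x : ℝ} (hx : x ∈ uIcc 0 t) :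
    0 < a + b * x := by
  rcases le_total 0 t with ht | ht <;> simp only [uIcc_of_le, uIcc_of_ge, ht, mem_Icc] at hx <;>
    rcases le_total 0 b with hb | hb <;> nlinarith [hx.1, hx.2]

theorem intervalIntegrable_one_div_affine_sq (ha : 0 < a) (hat : 0 < a + b * t) :
    IntervalIntegrable (fun x => 1 / (a + b * x) ^ 2) volume 0 t :=
  (continuousOn_const.div (by fun_prop) fun _ hx =>
    (pow_pos (affine_pos_of_mem_uIcc ha hat hx) 2).ne').intervalIntegrable

theorem integral_one_div_affine_sq (ha : 0 < a) (hat : 0 < a + b * t) :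
    ∫ x in 0..t, 1 / (a + b * x) ^ 2 = t / (a * (a + b * t)) := by
  have hderiv : ∀ x ∈ uIcc 0 t,
      HasDerivAt (fun x => x / (a * (a + b * x))) (1 / (a + b * x) ^ 2) x := by
    intro x hx
    have hpos := affine_pos_of_mem_uIcc ha hat hx
    refine ((hasDerivAt_id' x).div ((((hasDerivAt_id' x).const_mul b).const_add a).const_mul a)
      (by positivity)).congr_deriv ?_
    field_simp
    ring
  rw [integral_eq_sub_of_hasDerivAt hderiv (intervalIntegrable_one_div_affine_sq ha hat)]
  simp

theorem integral_two_mul_div_affine_cube (ha : 0 < a) (hat : 0 < a + b * t) :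
    ∫ x in 0..t, 2 * b / (a + b * x) ^ 3 = 1 / a ^ 2 - 1 / (a + b * t) ^ 2 := by
  have hderiv : ∀ x ∈ uIcc 0 t,
      HasDerivAt (fun x => -1 / (a + b * x) ^ 2) (2 * b / (a + b * x) ^ 3) x := by
    intro x hx
    have hpos := affine_pos_of_mem_uIcc ha hat hx
    refine ((hasDerivAt_const x (-1)).div (((hasDerivAt_id' x).const_mul b).const_add a |>.pow 2)
      (pow_pos hpos 2).ne').congr_deriv ?_
    simp only [Pi.pow_apply]
    field_simp
    ring
  have hint : IntervalIntegrable (fun x => 2 * b / (a + b * x) ^ 3) volume 0 t :=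
    (continuousOn_const.div (by fun_prop) fun _ hx =>
      (pow_pos (affine_pos_of_mem_uIcc ha hat hx) 3).ne').intervalIntegrable
  rw [integral_eq_sub_of_hasDerivAt hderiv hint]
  ring

end Affine

def triangle (m : ℝ) : Set (ℝ × ℝ) := {p | 0 ≤ p.1 ∧ 0 ≤ p.2 ∧ p.1 + p.2 ≤ m}

theorem isClosed_triangle (m : ℝ) : IsClosed (triangle m) :=
  (isClosed_le continuous_const continuous_fst).inter <|
    (isClosed_le continuous_const continuous_snd).inter <|
      isClosed_le (continuous_fst.add continuous_snd) continuous_const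

theorem isCompact_triangle (m : ℝ) : IsCompact (triangle m) :=
  ((isCompact_Icc (a := 0) (b := m)).prod (isCompact_Icc (a := 0) (b := m))).of_isClosed_subset
    (isClosed_triangle m) fun _ ⟨h₁, h₂, h₃⟩ => ⟨⟨h₁, by linarith⟩, ⟨h₂, by linarith⟩⟩

theorem setIntegral_triangle {m : ℝ} (hm : 0 ≤ m) {f : ℝ × ℝ → ℝ}
    (hf : IntegrableOn f (triangle m)) :
    ∫ p in triangle m, f p = ∫ x in 0..m, ∫ y in 0..(m - x), f (x, y) := by
  rw [Measure.volume_eq_prod] at hf ⊢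
  rw [setIntegral_prod_eq_integral_setIntegral_preimage (isClosed_triangle m).measurableSet hf,
    integral_of_le hm, ← integral_Icc_eq_integral_Ioc,
    ← setIntegral_eq_integral_of_forall_compl_eq_zero]
  · refine setIntegral_congr_fun measurableSet_Icc fun x ⟨hx₀, hxm⟩ => ?_
    have hsection : Prod.mk x ⁻¹' triangle m = Icc 0 (m - x) := by
      ext y
      simp only [triangle, mem_preimage, mem_ofPred_eq, mem_Icc]
      constructor
      · rintro ⟨-, hy, hxy⟩; exact ⟨hy, by linarith⟩
      · rintro ⟨hy, hxy⟩; exact ⟨hx₀, hy, by linarith⟩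
    rw [hsection, integral_of_le (by linarith), integral_Icc_eq_integral_Ioc]
  · intro x hx
    have hsection : Prod.mk x ⁻¹' triangle m = ∅ := by
      ext y
      simp only [triangle, mem_preimage, mem_ofPred_eq, mem_empty_iff_false, iff_false]
      rintro ⟨hx₀, hy, hxy⟩
      exact hx ⟨hx₀, by linarith⟩
    rw [hsection, Measure.restrict_empty, integral_zero_measure]

theorem integral_triangle_integrand_section {m X₁ X₂ x : ℝ} (hX₁ : 0 ≤ X₁) (hX₂ : 0 ≤ X₂)
    (hx : x ∈ Icc 0 m) :
    ∫ y in 0..(m - x), 2 * X₁ * X₂ / (1 + x * X₁ + y * X₂) ^ 3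
      = X₁ * (1 / (1 + X₁ * x) ^ 2 - 1 / ((1 + m * X₂) + (X₁ - X₂) * x) ^ 2) := by
  have hden₀ : 0 < 1 + x * X₁ := by nlinarith [mul_nonneg hx.1 hX₁]
  have hden₁ : 0 < 1 + x * X₁ + X₂ * (m - x) := by
    nlinarith [mul_nonneg hx.1 hX₁, mul_nonneg (sub_nonneg.2 hx.2) hX₂]
  calc ∫ y in 0..(m - x), 2 * X₁ * X₂ / (1 + x * X₁ + y * X₂) ^ 3
      = X₁ * ∫ y in 0..(m - x), 2 * X₂ / ((1 + x * X₁) + X₂ * y) ^ 3 := by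
        rw [← intervalIntegral.integral_const_mul]
        congr 1 with y
        ring
    _ = _ := by
        rw [integral_two_mul_div_affine_cube hden₀ hden₁]
        ring

theorem triangle_integral (m X₁ X₂ : ℝ) (hm : 0 < m) (hX₁ : 0 < X₁) (hX₂ : 0 < X₂) :
    ∫ a in {a : Fin 2 → ℝ | 0 ≤ a 0 ∧ 0 ≤ a 1 ∧ a 0 + a 1 ≤ m},
      2 * X₁ * X₂ / (1 + a 0 * X₁ + a 1 * X₂) ^ 3 ∂volume
    = m ^ 2 * X₁ * X₂ / ((1 + m * X₁) * (1 + m * X₂)) := by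
  rw [← (volume_preserving_finTwoArrow ℝ).symm.map_eq, setIntegral_map_equiv]
  simp only [MeasurableEquiv.finTwoArrow_symm_apply, Fin.cons_zero, Fin.cons_one,
    preimage_ofPred_eq]
  change ∫ p in triangle m, 2 * X₁ * X₂ / (1 + p.1 * X₁ + p.2 * X₂) ^ 3 = _
  have hden : ∀ p ∈ triangle m, 0 < 1 + p.1 * X₁ + p.2 * X₂ := fun p ⟨h₁, h₂, _⟩ => by
    positivity
  have hint : IntegrableOn (fun p : ℝ × ℝ => 2 * X₁ * X₂ / (1 + p.1 * X₁ + p.2 * X₂) ^ 3)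
      (triangle m) :=
    (continuousOn_const.div (by fun_prop) fun p hp => (pow_pos (hden p hp) 3).ne')
      |>.integrableOn_compact (isCompact_triangle m)
  have hpos₁ : 0 < 1 + X₁ * m := by positivity
  have hpos₂ : 0 < (1 + m * X₂) + (X₁ - X₂) * m := by nlinarith
  rw [setIntegral_triangle hm.le hint, integral_congr fun x hx =>
      integral_triangle_integrand_section hX₁.le hX₂.le (uIcc_of_le hm.le ▸ hx),
    intervalIntegral.integral_const_mul,
    integral_sub (intervalIntegrable_one_div_affine_sq one_pos hpos₁)
      (intervalIntegrable_one_div_affine_sq (by positivity) hpos₂),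
    integral_one_div_affine_sq one_pos hpos₁, integral_one_div_affine_sq (by positivity) hpos₂,
    show 1 + m * X₂ + (X₁ - X₂) * m = 1 + m * X₁ by ring, mul_comm X₁ m]
  field_simp
  ring
end

section
/- Let X_1, X_2, X_3 > 0 and let T be the triangle in ℝ^3 with vertices (0,0,0), (1,0,1), (0,1,1). Let T^{12} = {a + λ e_3 : a ∈ T, λ ≥ 0} be the infinite column over T in the e_3 direction. Then ∫_{T^{12}} 3! X_1 X_2 X_3 / (1 + a_1 X_1 + a_2 X_2 + a_3 X_3)^4 da = X_1 X_2 / ((1 + X_1 + X_3)(1 + X_2 + X_3)). -/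
/-!
Integrate in the order a₃, a₂, a₁. On the ray a₃ ≥ a₁ + a₂ the a₃-integral is
2X₁X₂ / (1 + a₁(X₁+X₃) + a₂(X₂+X₃))³; over 0 ≤ a₂ ≤ 1 - a₁ this leaves X₁X₂/(X₂+X₃) times the
difference of the inverse squares of 1 + a₁(X₁+X₃) and 1 + X₂ + X₃ + a₁(X₁-X₂). Both are integrated
over [0, 1] with the antiderivative (t - a)/((c + ad)(c + td)) of 1/(c + td)², valid for every slope
d, including the slope X₁ - X₂ = 0; the result is
X₁X₂/(X₂+X₃) · (1/(1+X₁+X₃) - 1/((1+X₁+X₃)(1+X₂+X₃))) = X₁X₂/((1+X₁+X₃)(1+X₂+X₃)).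
-/

open MeasureTheory Set Filter Topology

section Fubini

variable {α β : Type*} [MeasurableSpace α] [MeasurableSpace β] {μ : Measure α} {ν : Measure β}
  [SFinite μ] [SFinite ν]

theorem integrableOn_prod_and_setIntegral_prod_eq_of_nonneg {S : Set α} {T : α → Set β}
    (hS : MeasurableSet S) (hR : MeasurableSet {q : α × β | q.1 ∈ S ∧ q.2 ∈ T q.1})
    {G : α × β → ℝ} (hGm : AEStronglyMeasurable G (μ.prod ν))
    (hG : ∀ x ∈ S, ∀ y ∈ T x, 0 ≤ G (x, y)) {g : α → ℝ}
    (hsec : ∀ x ∈ S, IntegrableOn (fun y => G (x, y)) (T x) ν ∧ ∫ y in T x, G (x, y) ∂ν = g x)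
    (hg : IntegrableOn g S μ) :
    IntegrableOn G {q | q.1 ∈ S ∧ q.2 ∈ T q.1} (μ.prod ν) ∧
      ∫ q in {q | q.1 ∈ S ∧ q.2 ∈ T q.1}, G q ∂(μ.prod ν) = ∫ x in S, g x ∂μ := by
  set R := {q : α × β | q.1 ∈ S ∧ q.2 ∈ T q.1}
  have hT : ∀ x ∈ S, MeasurableSet (T x) := fun x hx => by
    simpa [R, hx] using measurable_prodMk_left hR (x := x)
  have hF : ∀ x, (fun y => R.indicator G (x, y)) =
      S.indicator (fun x => (T x).indicator fun y => G (x, y)) x := by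
    intro x
    ext y
    by_cases hx : x ∈ S <;> by_cases hy : y ∈ T x <;> simp [R, hx, hy]
  have hF_int : ∀ x, Integrable (fun y => R.indicator G (x, y)) ν ∧
      ∫ y, R.indicator G (x, y) ∂ν = S.indicator g x := by
    intro x
    rw [hF]
    by_cases hx : x ∈ S
    · simpa [hx, integral_indicator (hT x hx)] using
        And.intro ((hsec x hx).1.integrable_indicator (hT x hx)) (hsec x hx).2
    · simp [hx]
  have hF_nonneg : 0 ≤ R.indicator G := indicator_nonneg fun q hq => hG q.1 hq.1 q.2 hq.2
  have hF_meas : AEStronglyMeasurable (R.indicator G) (μ.prod ν) := hGm.indicator hR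
  have hF_prod : Integrable (R.indicator G) (μ.prod ν) := by
    refine (integrable_prod_iff hF_meas).2 ⟨.of_forall fun x => (hF_int x).1, ?_⟩
    simp_rw [fun x y => Real.norm_of_nonneg (hF_nonneg (x, y)), fun x => (hF_int x).2]
    exact (integrable_indicator_iff hS).2 hg
  refine ⟨(integrable_indicator_iff hR).1 hF_prod, ?_⟩
  rw [← integral_indicator hR, integral_prod _ hF_prod, ← integral_indicator hS]
  simp_rw [fun x => (hF_int x).2]

end Fubini

theorem hasDerivAt_inv_pow_add_mul {c d x : ℝ} (n : ℕ) (hd : d ≠ 0) (hx : c + x * d ≠ 0) :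
    HasDerivAt (fun t => -((n + 1) * d * (c + t * d) ^ (n + 1))⁻¹) ((c + x * d) ^ (n + 2))⁻¹ x := by
  have hlin : HasDerivAt (fun t => c + t * d) d x := by
    simpa using ((hasDerivAt_id x).mul_const d).const_add c
  refine (((hlin.fun_pow (n + 1)).const_mul ((n + 1) * d)).fun_inv
    (mul_ne_zero (mul_ne_zero (by positivity) hd) (pow_ne_zero _ hx))).fun_neg.congr_deriv ?_
  simp only [add_tsub_cancel_right, Nat.cast_add, Nat.cast_one]
  generalize c + x * d = y at hx ⊢
  field_simp
  ring

section
variable {c d a : ℝ} (n : ℕ)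

theorem pos_add_mul_of_le (hd : 0 < d) (ha : 0 < c + a * d) {t : ℝ} (ht : a ≤ t) :
    0 < c + t * d := by
  nlinarith

theorem tendsto_neg_inv_pow_add_mul (hd : 0 < d) :
    Tendsto (fun t => -((n + 1) * d * (c + t * d) ^ (n + 1))⁻¹) atTop (𝓝 0) := by
  have hlin : Tendsto (fun t => c + t * d) atTop atTop :=
    tendsto_atTop_add_const_left _ _ (tendsto_id.atTop_mul_const hd)
  have := (((tendsto_pow_atTop (n := n + 1) (by omega)).comp hlin).const_mul_atTop
    (by positivity : (0 : ℝ) < (n + 1) * d)).inv_tendsto_atTop.neg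
  simpa using this

theorem integrableOn_Ici_inv_pow_add_mul (hd : 0 < d) (ha : 0 < c + a * d) :
    IntegrableOn (fun t => ((c + t * d) ^ (n + 2))⁻¹) (Ici a) := by
  rw [integrableOn_Ici_iff_integrableOn_Ioi]
  exact integrableOn_Ioi_deriv_of_nonneg'
    (fun t ht => hasDerivAt_inv_pow_add_mul n hd.ne' (pos_add_mul_of_le hd ha ht).ne')
    (fun t ht => inv_nonneg.2 (pow_pos (pos_add_mul_of_le hd ha ht.le) _).le)
    (tendsto_neg_inv_pow_add_mul n hd)

theorem integral_Ici_inv_pow_add_mul (hd : 0 < d) (ha : 0 < c + a * d) :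
    ∫ t in Ici a, ((c + t * d) ^ (n + 2))⁻¹ = ((n + 1) * d * (c + a * d) ^ (n + 1))⁻¹ := by
  rw [integral_Ici_eq_integral_Ioi, integral_Ioi_of_hasDerivAt_of_nonneg'
    (fun t ht => hasDerivAt_inv_pow_add_mul n hd.ne' (pos_add_mul_of_le hd ha ht).ne')
    (fun t ht => inv_nonneg.2 (pow_pos (pos_add_mul_of_le hd ha ht.le) _).le)
    (tendsto_neg_inv_pow_add_mul n hd), zero_sub, neg_neg]

theorem integrableOn_Icc_inv_pow_add_mul (hd : 0 < d) (ha : 0 < c + a * d) (b : ℝ) :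
    IntegrableOn (fun t => ((c + t * d) ^ (n + 2))⁻¹) (Icc a b) :=
  (integrableOn_Ici_inv_pow_add_mul n hd ha).mono_set Icc_subset_Ici_self

theorem integral_Icc_inv_pow_add_mul (hd : 0 < d) (ha : 0 < c + a * d) {b : ℝ} (hab : a ≤ b) :
    ∫ t in Icc a b, ((c + t * d) ^ (n + 2))⁻¹ =
      ((n + 1) * d * (c + a * d) ^ (n + 1))⁻¹ - ((n + 1) * d * (c + b * d) ^ (n + 1))⁻¹ := by
  rw [integral_Icc_eq_integral_Ioc, ← intervalIntegral.integral_of_le hab,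
    intervalIntegral.integral_eq_sub_of_hasDerivAt
      (fun t ht => hasDerivAt_inv_pow_add_mul n hd.ne' (pos_add_mul_of_le hd ha (by
        rw [uIcc_of_le hab] at ht; exact ht.1)).ne')
      ((intervalIntegrable_iff_integrableOn_Icc_of_le hab).2
        (integrableOn_Icc_inv_pow_add_mul n hd ha b))]
  ring

end

section
variable {a b c d : ℝ}

theorem pos_add_mul_of_mem_Icc (ha : 0 < c + a * d) (hb : 0 < c + b * d) {t : ℝ}
    (ht : t ∈ Icc a b) : 0 < c + t * d := by
  rcases le_total 0 d with hd | hd <;> nlinarith [ht.1, ht.2]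

theorem integrableOn_Icc_inv_sq_add_mul (ha : 0 < c + a * d) (hb : 0 < c + b * d) :
    IntegrableOn (fun t => ((c + t * d) ^ 2)⁻¹) (Icc a b) := by
  refine ContinuousOn.integrableOn_Icc (ContinuousOn.inv₀ (by fun_prop) fun t ht => ?_)
  exact (pow_pos (pos_add_mul_of_mem_Icc ha hb ht) 2).ne'

theorem integral_Icc_inv_sq_add_mul (ha : 0 < c + a * d) (hb : 0 < c + b * d) (hab : a ≤ b) :
    ∫ t in Icc a b, ((c + t * d) ^ 2)⁻¹ = (b - a) / ((c + a * d) * (c + b * d)) := by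
  have hderiv : ∀ t ∈ uIcc a b, HasDerivAt (fun t => (t - a) / ((c + a * d) * (c + t * d)))
      ((c + t * d) ^ 2)⁻¹ t := by
    intro t ht
    rw [uIcc_of_le hab] at ht
    have hpos := pos_add_mul_of_mem_Icc ha hb ht
    have hlin : HasDerivAt (fun t => (c + a * d) * (c + t * d)) ((c + a * d) * d) t := by
      simpa using (((hasDerivAt_id t).mul_const d).const_add c).const_mul (c + a * d)
    refine (((hasDerivAt_id t).sub_const a).div hlin (by positivity)).congr_deriv ?_
    simp only [id]
    field_simp
    ring
  rw [integral_Icc_eq_integral_Ioc, ← intervalIntegral.integral_of_le hab,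
    intervalIntegral.integral_eq_sub_of_hasDerivAt hderiv
      ((intervalIntegrable_iff_integrableOn_Icc_of_le hab).2
        (integrableOn_Icc_inv_sq_add_mul ha hb))]
  simp

end

theorem convexHull_zero_pair_eq {𝕜 E : Type*} [Field 𝕜] [LinearOrder 𝕜] [IsStrictOrderedRing 𝕜]
    [AddCommGroup E] [Module 𝕜 E] (v w : E) :
    convexHull 𝕜 {0, v, w} = {x | ∃ a b : 𝕜, 0 ≤ a ∧ 0 ≤ b ∧ a + b ≤ 1 ∧ a • v + b • w = x} := by
  apply Subset.antisymm
  · refine convexHull_min ?_ ?_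
    · rintro _ (rfl | rfl | rfl)
      · exact ⟨0, 0, le_rfl, le_rfl, by norm_num, by simp⟩
      · exact ⟨1, 0, zero_le_one, le_rfl, by norm_num, by simp⟩
      · exact ⟨0, 1, le_rfl, zero_le_one, by norm_num, by simp⟩
    · rintro _ ⟨a, b, ha, hb, hab, rfl⟩ _ ⟨a', b', ha', hb', hab', rfl⟩ θ η hθ hη hθη
      refine ⟨θ * a + η * a', θ * b + η * b', by positivity, by positivity, ?_, by module⟩
      nlinarith
  · rintro _ ⟨a, b, ha, hb, hab, rfl⟩
    have := (convex_convexHull 𝕜 ({0, v, w} : Set E)).sum_mem (t := Finset.univ)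
      (w := ![1 - a - b, a, b]) (z := ![0, v, w])
      (fun i _ => by fin_cases i <;> simp <;> linarith)
      (by simp [Fin.sum_univ_three]; ring)
      (fun i _ => subset_convexHull 𝕜 _ (by fin_cases i <;> simp))
    simpa [Fin.sum_univ_three] using this

noncomputable def finThreeEquivProd : (Fin 3 → ℝ) ≃ᵐ ℝ × ℝ × ℝ :=
  (MeasurableEquiv.piFinSuccAbove (fun _ => ℝ) 0).trans
    (MeasurableEquiv.prodCongr (MeasurableEquiv.refl ℝ) MeasurableEquiv.finTwoArrow)

theorem finThreeEquivProd_apply (x : Fin 3 → ℝ) : finThreeEquivProd x = (x 0, x 1, x 2) := rfl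

theorem volume_preserving_finThreeEquivProd : MeasurePreserving finThreeEquivProd :=
  ((MeasurePreserving.id volume).prod (volume_preserving_finTwoArrow ℝ)).comp
    (volume_preserving_piFinSuccAbove (fun _ => ℝ) 0)

def triangleColumnSlice (s : ℝ) : Set (ℝ × ℝ) := {q | q.1 ∈ Icc 0 (1 - s) ∧ q.2 ∈ Ici (s + q.1)}

def triangleColumn : Set (ℝ × ℝ × ℝ) := {p | p.1 ∈ Icc 0 1 ∧ p.2 ∈ triangleColumnSlice p.1}

theorem preimage_triangleColumn : finThreeEquivProd ⁻¹' triangleColumn =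
    {x : Fin 3 → ℝ | ∃ b ∈ convexHull ℝ {(![0, 0, 0] : Fin 3 → ℝ), ![1, 0, 1], ![0, 1, 1]},
      ∃ l : ℝ, 0 ≤ l ∧ x = b + l • (![0, 0, 1] : Fin 3 → ℝ)} := by
  have h0 : (![0, 0, 0] : Fin 3 → ℝ) = 0 := by ext i; fin_cases i <;> rfl
  rw [h0, convexHull_zero_pair_eq]
  ext x
  simp only [mem_preimage, finThreeEquivProd_apply, triangleColumn, triangleColumnSlice,
    mem_ofPred_eq, mem_Icc, mem_Ici]
  constructor
  · rintro ⟨⟨h0, -⟩, ⟨h1, h01⟩, h2⟩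
    refine ⟨_, ⟨x 0, x 1, h0, h1, by linarith, rfl⟩, x 2 - (x 0 + x 1), by linarith, ?_⟩
    ext i; fin_cases i <;> simp
  · rintro ⟨_, ⟨a, b, ha, hb, hab, rfl⟩, l, hl, rfl⟩
    refine ⟨⟨?_, ?_⟩, ⟨?_, ?_⟩, ?_⟩ <;> simp <;> linarith

noncomputable def columnDensity (X₁ X₂ X₃ : ℝ) (p : ℝ × ℝ × ℝ) : ℝ :=
  (Nat.factorial 3 : ℝ) * (X₁ * X₂ * X₃) / (1 + p.1 * X₁ + p.2.1 * X₂ + p.2.2 * X₃) ^ 4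

theorem measurable_columnDensity (X₁ X₂ X₃ : ℝ) : Measurable (columnDensity X₁ X₂ X₃) := by
  unfold columnDensity; fun_prop

section
variable {X₁ X₂ X₃ : ℝ} (hX₁ : 0 < X₁) (hX₂ : 0 < X₂) (hX₃ : 0 < X₃)
include hX₁ hX₂ hX₃

theorem columnDensity_nonneg (p : ℝ × ℝ × ℝ) : 0 ≤ columnDensity X₁ X₂ X₃ p := by
  unfold columnDensity
  positivity

theorem integrableOn_and_setIntegral_Ici_columnDensity {s t : ℝ} (hs : 0 ≤ s) (ht : 0 ≤ t) :
    IntegrableOn (fun z => columnDensity X₁ X₂ X₃ (s, t, z)) (Ici (s + t)) ∧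
      ∫ z in Ici (s + t), columnDensity X₁ X₂ X₃ (s, t, z) =
        2 * (X₁ * X₂) * ((1 + s * (X₁ + X₃) + t * (X₂ + X₃)) ^ 3)⁻¹ := by
  have ha : 0 < 1 + s * X₁ + t * X₂ + (s + t) * X₃ := by positivity
  simp only [columnDensity, div_eq_mul_inv]
  refine ⟨(integrableOn_Ici_inv_pow_add_mul 2 hX₃ ha).const_mul _, ?_⟩
  rw [integral_const_mul, integral_Ici_inv_pow_add_mul 2 hX₃ ha]
  norm_num [Nat.factorial]
  field_simp
  ring

theorem integrableOn_and_setIntegral_triangleColumnSlice {s : ℝ} (hs : s ∈ Icc 0 1) :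
    IntegrableOn (fun q => columnDensity X₁ X₂ X₃ (s, q)) (triangleColumnSlice s) ∧
      ∫ q in triangleColumnSlice s, columnDensity X₁ X₂ X₃ (s, q) =
        X₁ * X₂ / (X₂ + X₃) *
          (((1 + s * (X₁ + X₃)) ^ 2)⁻¹ - ((1 + X₂ + X₃ + s * (X₁ - X₂)) ^ 2)⁻¹) := by
  obtain ⟨hs₀, hs₁⟩ := hs
  have hc : 0 < 1 + s * (X₁ + X₃) + 0 * (X₂ + X₃) := by nlinarith
  have hd : 0 < X₂ + X₃ := by linarith
  have ht_int := (integrableOn_Icc_inv_pow_add_mul 1 hd hc (1 - s)).const_mul (2 * (X₁ * X₂))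
  have ht_val := integral_Icc_inv_pow_add_mul 1 hd hc (by linarith : (0 : ℝ) ≤ 1 - s)
  norm_num at ht_int ht_val
  obtain ⟨hint, hval⟩ := integrableOn_prod_and_setIntegral_prod_eq_of_nonneg
    (μ := volume) (ν := volume) (T := fun t => Ici (s + t))
    (G := fun q => columnDensity X₁ X₂ X₃ (s, q))
    measurableSet_Icc (by measurability)
    ((measurable_columnDensity X₁ X₂ X₃).comp measurable_prodMk_left).aestronglyMeasurable
    (fun _ _ _ _ => columnDensity_nonneg hX₁ hX₂ hX₃ _)
    (fun _ ht => integrableOn_and_setIntegral_Ici_columnDensity hX₁ hX₂ hX₃ hs₀ ht.1) ht_int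
  rw [Measure.volume_eq_prod]
  refine ⟨hint, hval.trans ?_⟩
  rw [integral_const_mul, ht_val,
    show 1 + s * (X₁ + X₃) + (1 - s) * (X₂ + X₃) = 1 + X₂ + X₃ + s * (X₁ - X₂) by ring]
  field_simp

theorem integral_triangleColumn :
    ∫ p in triangleColumn, columnDensity X₁ X₂ X₃ p =
      X₁ * X₂ / ((1 + X₁ + X₃) * (1 + X₂ + X₃)) := by
  have h₁ : (0 : ℝ) < 1 + 0 * (X₁ + X₃) := by norm_num
  have h₂ : (0 : ℝ) < 1 + 1 * (X₁ + X₃) := by linarith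
  have h₃ : 0 < 1 + X₂ + X₃ + 0 * (X₁ - X₂) := by linarith
  have h₄ : 0 < 1 + X₂ + X₃ + 1 * (X₁ - X₂) := by linarith
  have hs_int := ((integrableOn_Icc_inv_sq_add_mul h₁ h₂).sub
    (integrableOn_Icc_inv_sq_add_mul h₃ h₄)).const_mul (X₁ * X₂ / (X₂ + X₃))
  obtain ⟨-, hval⟩ := integrableOn_prod_and_setIntegral_prod_eq_of_nonneg
    (μ := volume) (ν := volume) (T := triangleColumnSlice)
    measurableSet_Icc (by simp only [triangleColumnSlice, mem_Icc, mem_Ici]; measurability)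
    (measurable_columnDensity X₁ X₂ X₃).aestronglyMeasurable
    (fun _ _ _ _ => columnDensity_nonneg hX₁ hX₂ hX₃ _)
    (fun _ hs => integrableOn_and_setIntegral_triangleColumnSlice hX₁ hX₂ hX₃ hs) hs_int
  rw [Measure.volume_eq_prod]
  refine hval.trans ?_
  rw [integral_const_mul, integral_sub (integrableOn_Icc_inv_sq_add_mul h₁ h₂)
    (integrableOn_Icc_inv_sq_add_mul h₃ h₄), integral_Icc_inv_sq_add_mul h₁ h₂ zero_le_one,
    integral_Icc_inv_sq_add_mul h₃ h₄ zero_le_one,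
    show 1 + X₂ + X₃ + 1 * (X₁ - X₂) = 1 + 1 * (X₁ + X₃) by ring]
  simp only [zero_mul, one_mul, add_zero, sub_zero] at h₂ ⊢
  field_simp
  ring

end

theorem column_example (X₁ X₂ X₃ : ℝ) (hX₁ : 0 < X₁) (hX₂ : 0 < X₂) (hX₃ : 0 < X₃) :
    ∫ a in {x : Fin 3 → ℝ | ∃ b ∈ convexHull ℝ
        {(![0, 0, 0] : Fin 3 → ℝ), ![1, 0, 1], ![0, 1, 1]},
        ∃ l : ℝ, 0 ≤ l ∧ x = b + l • (![0, 0, 1] : Fin 3 → ℝ)},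
      (Nat.factorial 3 : ℝ) * (X₁ * X₂ * X₃) /
        (1 + a 0 * X₁ + a 1 * X₂ + a 2 * X₃) ^ 4 ∂volume
    = X₁ * X₂ / ((1 + X₁ + X₃) * (1 + X₂ + X₃)) := by
  rw [← preimage_triangleColumn]
  exact (volume_preserving_finThreeEquivProd.setIntegral_preimage_emb
    finThreeEquivProd.measurableEmbedding (columnDensity X₁ X₂ X₃) triangleColumn).trans
    (integral_triangleColumn hX₁ hX₂ hX₃)
end

section
/- For positive integers m_1,...,m_n and positive reals X_1,...,X_n, the integral over the simplex N = {(a_1,...,a_n) : a_i ≥ 0, a_1/m_1 + ⋯ + a_n/m_n ≤ 1} of n! X_1⋯X_n / (1 + a·X)^{n+1} da equals m_1⋯m_n · X_1⋯X_n / ((1 + m_1 X_1)⋯(1 + m_n X_n)). -/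
/-!
Generalize to `∫_{Δ(μ)} n! / (c + a ⬝ X) ^ (n + 1) = ∏ μ i / (c * ∏ (c + μ i * X i))`, valid
whenever `c + a ⬝ X` is positive at the vertices `0`, `μ i • e i` of the simplex `Δ(μ)`, where
its values are `c` and `c + μ i * X i`. Slicing along a coordinate `j` with `X j ≠ 0`, the fiber
integral of `(n + 1)! / (d + t * X j) ^ (n + 2)` is `(X j)⁻¹` times the difference of the
`n`-dimensional integrand at the two ends of the fiber. Each is an integral of the same shape over
the face `a j = 0`, with the vertex values of `Δ(μ)` except `c + μ j * X j`, resp. except `c`, so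
induction on `n` applies. When `X = 0` the integrand is constant, and the volume `∏ μ i / n!`
comes from the Dirichlet integrals `∫_{Δ(μ)} (1 - ∑ a i / μ i) ^ k`.
-/

open MeasureTheory Set

def weightedSimplex {n : ℕ} (μ : Fin n → ℝ) : Set (Fin n → ℝ) :=
  {a | (∀ i, 0 ≤ a i) ∧ ∑ i, a i / μ i ≤ 1}

section Topology

variable {n : ℕ} (μ : Fin n → ℝ)

lemma isClosed_weightedSimplex : IsClosed (weightedSimplex μ) := by
  simp only [weightedSimplex, ofPred_and, ofPred_forall]
  exact (isClosed_iInter fun i => isClosed_le continuous_const (continuous_apply i)).inter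
    (isClosed_le (by fun_prop) continuous_const)

lemma measurableSet_weightedSimplex : MeasurableSet (weightedSimplex μ) :=
  (isClosed_weightedSimplex μ).measurableSet

lemma weightedSimplex_subset_Icc (hμ : ∀ i, 0 < μ i) : weightedSimplex μ ⊆ Icc 0 μ := by
  intro a ⟨ha, hsum⟩
  refine ⟨ha, fun i => ?_⟩
  have : a i / μ i ≤ 1 :=
    (Finset.single_le_sum (fun j _ => div_nonneg (ha j) (hμ j).le) (Finset.mem_univ i)).trans hsum
  rwa [div_le_one (hμ i)] at this

lemma isCompact_weightedSimplex (hμ : ∀ i, 0 < μ i) : IsCompact (weightedSimplex μ) :=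
  isCompact_Icc.of_isClosed_subset (isClosed_weightedSimplex μ) (weightedSimplex_subset_Icc μ hμ)

end Topology

lemma integral_eq_integral_integral_insertNth {n : ℕ} (j : Fin (n + 1))
    {f : (Fin (n + 1) → ℝ) → ℝ} (hf : Integrable f) :
    ∫ x, f x = ∫ b : Fin n → ℝ, ∫ t : ℝ, f (j.insertNth t b) := by
  have he := (volume_preserving_piFinSuccAbove (fun _ : Fin (n + 1) => ℝ) j).symm
  have hfe := (he.integrable_comp_emb (MeasurableEquiv.measurableEmbedding _)).mpr hf
  rw [← he.integral_comp (MeasurableEquiv.measurableEmbedding _)]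
  rw [Measure.volume_eq_prod] at hfe ⊢
  exact integral_prod_symm _ hfe

lemma setIntegral_eq_setIntegral_setIntegral_insertNth {n : ℕ} (j : Fin (n + 1))
    {S : Set (Fin (n + 1) → ℝ)} {B : Set (Fin n → ℝ)} {I : (Fin n → ℝ) → Set ℝ}
    (hS : MeasurableSet S) (hB : MeasurableSet B) (hI : ∀ b, MeasurableSet (I b))
    (hmem : ∀ t b, j.insertNth t b ∈ S ↔ b ∈ B ∧ t ∈ I b)
    {f : (Fin (n + 1) → ℝ) → ℝ} (hf : IntegrableOn f S) :
    ∫ x in S, f x = ∫ b in B, ∫ t in I b, f (j.insertNth t b) := by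
  rw [← integral_indicator hS, integral_eq_integral_integral_insertNth j
    ((integrable_indicator_iff hS).mpr hf), ← integral_indicator hB]
  refine integral_congr_ae (.of_forall fun b => ?_)
  by_cases hb : b ∈ B
  · rw [indicator_of_mem hb, ← integral_indicator (hI b)]
    refine integral_congr_ae (.of_forall fun t => ?_)
    beta_reduce
    by_cases ht : t ∈ I b
    · rw [indicator_of_mem ((hmem t b).mpr ⟨hb, ht⟩), indicator_of_mem ht]
    · rw [indicator_of_notMem (fun h => ht ((hmem t b).mp h).2), indicator_of_notMem ht]
  · rw [indicator_of_notMem hb]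
    simp only [indicator_of_notMem (fun h => hb ((hmem _ b).mp h).1), integral_zero]

lemma Fin.sum_insertNth_apply {n : ℕ} (j : Fin (n + 1)) (t : ℝ) (b : Fin n → ℝ)
    (f : Fin (n + 1) → ℝ → ℝ) :
    ∑ i, f i (Fin.insertNth (α := fun _ => ℝ) j t b i)
      = f j t + ∑ i, f (j.succAbove i) (b i) := by
  simp only [Fin.sum_univ_succAbove _ j, Fin.insertNth_apply_same, Fin.insertNth_apply_succAbove]

lemma insertNth_mem_weightedSimplex_iff {n : ℕ} {μ : Fin (n + 1) → ℝ} (hμ : ∀ i, 0 < μ i)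
    (j : Fin (n + 1)) (t : ℝ) (b : Fin n → ℝ) :
    j.insertNth t b ∈ weightedSimplex μ ↔
      b ∈ weightedSimplex (μ ∘ j.succAbove) ∧
        t ∈ Icc 0 (μ j * (1 - ∑ i, b i / μ (j.succAbove i))) := by
  simp only [weightedSimplex, mem_ofPred_eq, mem_Icc, Function.comp_apply,
    Fin.forall_iff_succAbove j, Fin.sum_univ_succAbove _ j, Fin.insertNth_apply_same,
    Fin.insertNth_apply_succAbove]
  rw [← div_le_iff₀' (hμ j)]
  constructor
  · rintro ⟨⟨ht, hb⟩, hsum⟩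
    have := div_nonneg ht (hμ j).le
    exact ⟨⟨hb, by linarith⟩, ht, by linarith⟩
  · rintro ⟨⟨hb, -⟩, ht, htop⟩
    exact ⟨⟨ht, hb⟩, by linarith⟩

lemma integral_Icc_sub_div_pow (k : ℕ) {M r : ℝ} (hM : 0 < M) (hr : 0 ≤ r) :
    ∫ t in Icc 0 (M * r), (r - t / M) ^ k = M * r ^ (k + 1) / (k + 1) := by
  rw [integral_Icc_eq_integral_Ioc, ← intervalIntegral.integral_of_le (by positivity),
    intervalIntegral.integral_comp_sub_div (fun x => x ^ k) hM.ne', integral_pow,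
    mul_div_cancel_left₀ _ hM.ne']
  simp only [zero_div, sub_zero, sub_self, zero_pow (Nat.succ_ne_zero k), smul_eq_mul]
  ring

lemma integral_Icc_factorial_div_pow (ν : ℕ) {d X B : ℝ} (hB : 0 ≤ B) (hX : X ≠ 0)
    (hpos : ∀ t ∈ Icc 0 B, 0 < d + t * X) :
    ∫ t in Icc 0 B, ((ν + 1).factorial : ℝ) / (d + t * X) ^ (ν + 2)
      = X⁻¹ * ((ν.factorial : ℝ) / d ^ (ν + 1) - ν.factorial / (d + B * X) ^ (ν + 1)) := by
  have hderiv : ∀ t ∈ uIcc 0 B,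
      HasDerivAt (fun t => -(X⁻¹ * ν.factorial) * ((d + t * X) ^ (ν + 1))⁻¹)
        (((ν + 1).factorial : ℝ) / (d + t * X) ^ (ν + 2)) t := by
    intro t ht
    have hne := (hpos t (uIcc_of_le hB ▸ ht)).ne'
    have hlin : HasDerivAt (fun t : ℝ => d + t * X) X t := by
      simpa using ((hasDerivAt_id t).mul_const X).const_add d
    refine (((hlin.pow (ν + 1)).inv (pow_ne_zero _ hne)).const_mul _).congr_deriv ?_
    simp only [Pi.pow_apply, Nat.add_sub_cancel, Nat.factorial_succ, Nat.cast_mul]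
    generalize d + t * X = u at hne ⊢
    field_simp
    ring
  have hcont : ContinuousOn (fun t => ((ν + 1).factorial : ℝ) / (d + t * X) ^ (ν + 2))
      (uIcc 0 B) :=
    continuousOn_const.div (by fun_prop) fun t ht =>
      pow_ne_zero _ (hpos t (uIcc_of_le hB ▸ ht)).ne'
  rw [integral_Icc_eq_integral_Ioc, ← intervalIntegral.integral_of_le hB,
    intervalIntegral.integral_eq_sub_of_hasDerivAt hderiv hcont.intervalIntegrable]
  simp only [zero_mul, add_zero]
  ring

theorem setIntegral_weightedSimplex_one_sub_pow {n : ℕ} {μ : Fin n → ℝ} (hμ : ∀ i, 0 < μ i)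
    (k : ℕ) :
    ∫ a in weightedSimplex μ, (1 - ∑ i, a i / μ i) ^ k
      = (∏ i, μ i) * k.factorial / (n + k).factorial := by
  induction n generalizing k with
  | zero =>
    simp [weightedSimplex, Measure.real, volume_pi, (Nat.factorial_pos k).ne']
  | succ n ih =>
    have hμ' : ∀ i, 0 < (μ ∘ Fin.succAbove 0) i := fun i => hμ _
    rw [setIntegral_eq_setIntegral_setIntegral_insertNth 0 (measurableSet_weightedSimplex μ)
      (measurableSet_weightedSimplex _) (fun _ => measurableSet_Icc)
      (insertNth_mem_weightedSimplex_iff hμ 0)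
      ((by fun_prop : Continuous fun a : Fin (n + 1) → ℝ => (1 - ∑ i, a i / μ i) ^ k)
        |>.continuousOn.integrableOn_compact (isCompact_weightedSimplex μ hμ))]
    have hfiber : ∀ b ∈ weightedSimplex (μ ∘ Fin.succAbove 0),
        ∫ t in Icc 0 (μ 0 * (1 - ∑ i, b i / μ (Fin.succAbove 0 i))),
          (1 - ∑ i, Fin.insertNth (α := fun _ => ℝ) 0 t b i / μ i) ^ k
        = μ 0 / (k + 1) * (1 - ∑ i, b i / μ (Fin.succAbove 0 i)) ^ (k + 1) := by
      intro b hb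
      have hr : 0 ≤ 1 - ∑ i, b i / μ (Fin.succAbove 0 i) := sub_nonneg.mpr hb.2
      simp_rw [Fin.sum_insertNth_apply 0 _ b (fun i x => x / μ i), ← sub_sub,
        sub_right_comm _ (_ / μ 0)]
      rw [integral_Icc_sub_div_pow k (hμ 0) hr]
      ring
    rw [setIntegral_congr_fun (measurableSet_weightedSimplex _) hfiber, integral_const_mul]
    have := ih hμ' (k + 1)
    simp only [Function.comp_apply] at this
    rw [this, Fin.prod_univ_succAbove μ 0, show n + (k + 1) = n + 1 + k by omega,
      Nat.factorial_succ]
    push_cast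
    field_simp

lemma measureReal_weightedSimplex {n : ℕ} {μ : Fin n → ℝ} (hμ : ∀ i, 0 < μ i) :
    volume.real (weightedSimplex μ) = (∏ i, μ i) / n.factorial := by
  simpa [Nat.factorial_ne_zero] using setIntegral_weightedSimplex_one_sub_pow hμ 0

section Kernel

variable {n : ℕ} {μ X : Fin n → ℝ} {c : ℝ}

lemma add_sum_mul_pos_of_mem_weightedSimplex (hμ : ∀ i, 0 < μ i) (hc : 0 < c)
    (hcX : ∀ i, 0 < c + μ i * X i) {a : Fin n → ℝ} (ha : a ∈ weightedSimplex μ) :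
    0 < c + ∑ i, a i * X i := by
  have hw : ∀ i, 0 ≤ a i / μ i := fun i => div_nonneg (ha.1 i) (hμ i).le
  -- a convex combination of the vertex values `c` and `c + μ i * X i`
  have hcomb : c + ∑ i, a i * X i
      = (1 - ∑ i, a i / μ i) * c + ∑ i, a i / μ i * (c + μ i * X i) := by
    have hterm : ∀ i, a i / μ i * (c + μ i * X i) = a i / μ i * c + a i * X i := fun i => by
      field_simp [(hμ i).ne']
    rw [Finset.sum_congr rfl fun i _ => hterm i, Finset.sum_add_distrib, ← Finset.sum_mul]
    ring
  rw [hcomb]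
  rcases lt_or_ge (∑ i, a i / μ i) 1 with hlt | hge
  · have := Finset.sum_nonneg fun i (_ : i ∈ Finset.univ) => mul_nonneg (hw i) (hcX i).le
    nlinarith
  · obtain ⟨i, -, hi⟩ := Finset.exists_lt_of_sum_lt (f := fun _ => (0 : ℝ))
      (g := fun i => a i / μ i) (by rw [Finset.sum_const_zero]; exact one_pos.trans_le hge)
    have := Finset.sum_pos' (fun i _ => mul_nonneg (hw i) (hcX i).le)
      ⟨i, Finset.mem_univ i, mul_pos hi (hcX i)⟩
    nlinarith [ha.2]

lemma integrableOn_weightedSimplex_div_pow (hμ : ∀ i, 0 < μ i) (hc : 0 < c)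
    (hcX : ∀ i, 0 < c + μ i * X i) (C : ℝ) (p : ℕ) :
    IntegrableOn (fun a => C / (c + ∑ i, a i * X i) ^ p) (weightedSimplex μ) :=
  ContinuousOn.integrableOn_compact (isCompact_weightedSimplex μ hμ) <|
    continuousOn_const.div (by fun_prop) fun a ha =>
      pow_ne_zero _ (add_sum_mul_pos_of_mem_weightedSimplex hμ hc hcX ha).ne'

lemma setIntegral_weightedSimplex_factorial_div_pow_of_forall_eq_zero (hμ : ∀ i, 0 < μ i)
    (hc : c ≠ 0) (hX : ∀ i, X i = 0) :
    ∫ a in weightedSimplex μ, (n.factorial : ℝ) / (c + ∑ i, a i * X i) ^ (n + 1)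
      = (∏ i, μ i) / (c * ∏ i, (c + μ i * X i)) := by
  simp only [hX, mul_zero, Finset.sum_const_zero, add_zero, setIntegral_const,
    measureReal_weightedSimplex hμ, Finset.prod_const, Finset.card_univ, Fintype.card_fin,
    smul_eq_mul]
  field_simp [Nat.factorial_ne_zero]
  ring

end Kernel

/- Over `b`, the top of the fiber is `a j = μ j * (1 - ∑ i, b i / μ (j.succAbove i))`, where
`c + a ⬝ X` equals `(c + μ j * X j) + b ⬝ topFaceWeights μ X j`. -/
noncomputable def topFaceWeights {n : ℕ} (μ X : Fin (n + 1) → ℝ) (j : Fin (n + 1)) : Fin n → ℝ :=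
  fun i => X (j.succAbove i) - μ j * X j / μ (j.succAbove i)

lemma add_mul_topFaceWeights {n : ℕ} {μ : Fin (n + 1) → ℝ} (hμ : ∀ i, 0 < μ i)
    (X : Fin (n + 1) → ℝ) (c : ℝ) (j : Fin (n + 1)) (i : Fin n) :
    c + μ j * X j + μ (j.succAbove i) * topFaceWeights μ X j i
      = c + μ (j.succAbove i) * X (j.succAbove i) := by
  rw [topFaceWeights, mul_sub, mul_div_cancel₀ _ (hμ _).ne']
  ring

lemma integral_Icc_factorial_div_pow_insertNth {n : ℕ} {μ X : Fin (n + 1) → ℝ} {c : ℝ}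
    (hμ : ∀ i, 0 < μ i) (hc : 0 < c) (hcX : ∀ i, 0 < c + μ i * X i) {j : Fin (n + 1)}
    (hj : X j ≠ 0) {b : Fin n → ℝ} (hb : b ∈ weightedSimplex (μ ∘ j.succAbove)) :
    ∫ t in Icc 0 (μ j * (1 - ∑ i, b i / μ (j.succAbove i))), ((n + 1).factorial : ℝ)
        / (c + ∑ i, Fin.insertNth (α := fun _ => ℝ) j t b i * X i) ^ (n + 2)
      = (X j)⁻¹ * ((n.factorial : ℝ) / (c + ∑ i, b i * X (j.succAbove i)) ^ (n + 1)
          - n.factorial / (c + μ j * X j + ∑ i, b i * topFaceWeights μ X j i) ^ (n + 1)) := by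
  have hval : ∀ t, c + ∑ i, Fin.insertNth (α := fun _ => ℝ) j t b i * X i
      = (c + ∑ i, b i * X (j.succAbove i)) + t * X j := fun t => by
    rw [Fin.sum_insertNth_apply j t b (fun i x => x * X i)]
    ring
  have htop : c + ∑ i, b i * X (j.succAbove i) + μ j * (1 - ∑ i, b i / μ (j.succAbove i)) * X j
      = c + μ j * X j + ∑ i, b i * topFaceWeights μ X j i := by
    have hsum : ∑ i, b i * topFaceWeights μ X j i
        = ∑ i, b i * X (j.succAbove i) - μ j * X j * ∑ i, b i / μ (j.succAbove i) := by
      rw [Finset.mul_sum, ← Finset.sum_sub_distrib]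
      exact Finset.sum_congr rfl fun i _ => by rw [topFaceWeights]; ring
    rw [hsum]
    ring
  have hpos : ∀ t ∈ Icc 0 (μ j * (1 - ∑ i, b i / μ (j.succAbove i))),
      0 < c + ∑ i, b i * X (j.succAbove i) + t * X j := fun t ht => by
    rw [← hval]
    exact add_sum_mul_pos_of_mem_weightedSimplex hμ hc hcX
      ((insertNth_mem_weightedSimplex_iff hμ j t b).mpr ⟨hb, ht⟩)
  have hB : 0 ≤ μ j * (1 - ∑ i, b i / μ (j.succAbove i)) :=
    mul_nonneg (hμ j).le (sub_nonneg.mpr hb.2)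
  simp_rw [hval]
  rw [integral_Icc_factorial_div_pow n hB hj hpos, htop]

theorem setIntegral_weightedSimplex_factorial_div_pow {n : ℕ} {μ X : Fin n → ℝ} {c : ℝ}
    (hμ : ∀ i, 0 < μ i) (hc : 0 < c) (hcX : ∀ i, 0 < c + μ i * X i) :
    ∫ a in weightedSimplex μ, (n.factorial : ℝ) / (c + ∑ i, a i * X i) ^ (n + 1)
      = (∏ i, μ i) / (c * ∏ i, (c + μ i * X i)) := by
  induction n generalizing c with
  | zero =>
    exact setIntegral_weightedSimplex_factorial_div_pow_of_forall_eq_zero hμ hc.ne' (·.elim0)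
  | succ n ih =>
    by_cases hX : ∀ i, X i = 0
    · exact setIntegral_weightedSimplex_factorial_div_pow_of_forall_eq_zero hμ hc.ne' hX
    obtain ⟨j, hj⟩ := not_forall.mp hX
    have hμ' : ∀ i, 0 < μ (j.succAbove i) := fun i => hμ _
    have hcX' : ∀ i, 0 < c + μ (j.succAbove i) * X (j.succAbove i) := fun i => hcX _
    have hcX'' : ∀ i, 0 < c + μ j * X j + μ (j.succAbove i) * topFaceWeights μ X j i :=
      fun i => (add_mul_topFaceWeights hμ X c j i).symm ▸ hcX' i
    have hbot := ih (μ := μ ∘ j.succAbove) (X := X ∘ j.succAbove) hμ' hc hcX'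
    have htop := ih (μ := μ ∘ j.succAbove) (X := topFaceWeights μ X j) hμ' (hcX j) hcX''
    simp only [Function.comp_apply, add_mul_topFaceWeights hμ] at hbot htop
    rw [setIntegral_eq_setIntegral_setIntegral_insertNth j (measurableSet_weightedSimplex μ)
        (measurableSet_weightedSimplex _) (fun _ => measurableSet_Icc)
        (insertNth_mem_weightedSimplex_iff hμ j)
        (integrableOn_weightedSimplex_div_pow hμ hc hcX _ _),
      setIntegral_congr_fun (measurableSet_weightedSimplex _)
        fun b hb => integral_Icc_factorial_div_pow_insertNth hμ hc hcX hj hb,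
      integral_const_mul, integral_sub ?_ ?_, hbot, htop, Fin.prod_univ_succAbove _ j,
      Fin.prod_univ_succAbove (fun i => c + μ i * X i) j]
    · have : c + X j * μ j ≠ 0 := mul_comm (μ j) (X j) ▸ (hcX j).ne'
      have := (Finset.prod_pos fun i (_ : i ∈ Finset.univ) => hcX' i).ne'
      field_simp
      ring
    · exact integrableOn_weightedSimplex_div_pow hμ' hc hcX' _ _
    · exact integrableOn_weightedSimplex_div_pow hμ' (hcX j) hcX'' _ _

theorem complete_intersection_integral_general (n : ℕ)
    (m : Fin n → ℕ) (hm : ∀ i, 0 < m i)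
    (X : Fin n → ℝ) (hX : ∀ i, 0 < X i) :
    ∫ a in {a : Fin n → ℝ | (∀ i, 0 ≤ a i) ∧ ∑ i, a i / (m i : ℝ) ≤ 1},
      (Nat.factorial n : ℝ) * (∏ i, X i) / (1 + ∑ i, a i * X i) ^ (n + 1) ∂volume
    = (∏ i, (m i : ℝ)) * (∏ i, X i) / ∏ i, (1 + (m i : ℝ) * X i) := by
  have hμ : ∀ i, (0 : ℝ) < m i := fun i => Nat.cast_pos.mpr (hm i)
  have hcX : ∀ i, (0 : ℝ) < 1 + m i * X i := fun i => by have := hX i; positivity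
  simp_rw [mul_div_right_comm _ (∏ i, X i)]
  rw [integral_mul_const, ← weightedSimplex,
    setIntegral_weightedSimplex_factorial_div_pow hμ one_pos hcX, one_mul, div_mul_eq_mul_div]

theorem complete_intersection_integral (n : ℕ) (hn : 0 < n)
    (m : Fin n → ℕ) (hm : ∀ i, 0 < m i)
    (X : Fin n → ℝ) (hX : ∀ i, 0 < X i) :
    ∫ a in {a : Fin n → ℝ | (∀ i, 0 ≤ a i) ∧ ∑ i, a i / (m i : ℝ) ≤ 1},
      (Nat.factorial n : ℝ) * (∏ i, X i) / (1 + ∑ i, a i * X i) ^ (n + 1) ∂volume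
    = (∏ i, (m i : ℝ)) * (∏ i, X i) / ∏ i, (1 + (m i : ℝ) * X i) :=
  complete_intersection_integral_general n m hm X hX
end

section
/- Let n ≥ 2 and X_1, X_2 > 0, and suppose N' ⊂ ℝ_{≥0}^{n-1} is a measurable region. Let N ⊂ ℝ_{≥0}^n be the cone over N' (placed in the hyperplane a_n = 0) with apex (0,...,0,m), for m > 0: N = {((1−t)b, tm) : b ∈ N', t ∈ [0,1]}. Then for positive reals X_1,...,X_n: ∫_N n! X_1⋯X_n/(1 + a·X)^{n+1} da = (m X_n/(1 + m X_n)) · ∫_{N'} (n−1)! X_1⋯X_{n−1}/(1 + b·X')^n db, where X' = (X_1,...,X_{n−1}). -/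
/-!
Slicing the cone at height `s ∈ [0, m)` gives the scaled base `(1 - s/m) • N'`, so by Fubini and
the scaling of Lebesgue measure the integral over the cone becomes
`∫_{N'} ∫_0^m (1 - s/m)^n ρ(((1 - s/m) b, s)) ds db`, where `ρ` is the integrand on the left.
For fixed `b`, with `S = b·X'`, the inner integrand is a constant times
`(1 - s/m)^n / (1 + (1 - s/m) S + s X_n)^(n+2)`, the derivative of a multiple of
`((1 - s/m) / (1 + (1 - s/m) S + s X_n))^(n+1)`; this takes the values `(1 + S)^-(n+1)` at `s = 0`
and `0` at `s = m`, which produces the factor `m X_n / (1 + m X_n)`.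
-/

open MeasureTheory Set
open scoped Pointwise Nat

section HeightIntegral

variable {n : ℕ} {m S x : ℝ}

theorem one_sub_div_pos_of_mem_Ico {s : ℝ} (hs : s ∈ Ico 0 m) : 0 < 1 - s / m := by
  have hm : 0 < m := hs.1.trans_lt hs.2
  rw [sub_pos, div_lt_one hm]
  exact hs.2

theorem one_sub_div_mem_Icc (hm : 0 < m) {s : ℝ} (hs : s ∈ Icc 0 m) : 1 - s / m ∈ Icc 0 1 := by
  have := div_nonneg hs.1 hm.le
  have := (div_le_one hm).2 hs.2
  constructor <;> linarith

theorem hasDerivAt_one_sub_div_div_pow (hm : m ≠ 0) (hA : 1 + m * x ≠ 0) {s : ℝ}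
    (hD : 1 + (1 - s / m) * S + s * x ≠ 0) :
    HasDerivAt (fun s => -(m / ((n + 1) * (1 + m * x))) *
        ((1 - s / m) / (1 + (1 - s / m) * S + s * x)) ^ (n + 1))
      ((1 - s / m) ^ n / (1 + (1 - s / m) * S + s * x) ^ (n + 2)) s := by
  have hu : HasDerivAt (fun s => 1 - s / m) (-m⁻¹) s := by
    simpa [div_eq_mul_inv] using ((hasDerivAt_id s).mul_const m⁻¹).const_sub 1
  have hD' : HasDerivAt (fun s => 1 + (1 - s / m) * S + s * x) (-m⁻¹ * S + x) s :=
    ((hu.mul_const S).const_add 1).add ((hasDerivAt_id s).mul_const x |>.congr_deriv (one_mul x))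
  have hnum : -m⁻¹ * (1 + (1 - s / m) * S + s * x) - (1 - s / m) * (-m⁻¹ * S + x)
      = -((1 + m * x) / m) := by
    field_simp
    ring
  refine (((hu.fun_div hD' hD).fun_pow (n + 1)).const_mul _).congr_deriv ?_
  rw [hnum, Nat.add_sub_cancel]
  generalize 1 - s / m = u at hD ⊢
  generalize 1 + u * S + s * x = D at hD ⊢
  push_cast
  rw [div_pow]
  field_simp
  ring

theorem integral_Icc_one_sub_div_pow_div_pow (n : ℕ) (hm : 0 < m) (hS : 0 ≤ S) (hx : 0 ≤ x) :
    ∫ s in Icc 0 m, (1 - s / m) ^ n / (1 + (1 - s / m) * S + s * x) ^ (n + 2)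
      = m / ((n + 1) * (1 + m * x) * (1 + S) ^ (n + 1)) := by
  have hD : ∀ s ∈ uIcc 0 m, 0 < 1 + (1 - s / m) * S + s * x := by
    intro s hs
    rw [uIcc_of_le hm.le] at hs
    have : s / m ≤ 1 := (div_le_one hm).2 hs.2
    have := mul_nonneg (sub_nonneg.2 this) hS
    have := mul_nonneg hs.1 hx
    linarith
  have hA : 0 < 1 + m * x := by positivity
  rw [integral_Icc_eq_integral_Ioc, ← intervalIntegral.integral_of_le hm.le,
    intervalIntegral.integral_eq_sub_of_hasDerivAt
      (fun s hs => hasDerivAt_one_sub_div_div_pow hm.ne' hA.ne' (hD s hs).ne')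
      (ContinuousOn.intervalIntegrable (by
        refine ContinuousOn.div (by fun_prop) (by fun_prop) fun s hs => (pow_pos (hD s hs) _).ne'))]
  simp [hm.ne']
  field_simp

end HeightIntegral

section PuncturedCone

variable {V : Type*} [NormedAddCommGroup V] [NormedSpace ℝ V] {B : Set V} {m : ℝ}

/-- The cone over `B` with apex at height `m`, without its apex, in coordinates `(height, base)`. -/
def puncturedCone (B : Set V) (m : ℝ) : Set (ℝ × V) :=
  {p | p.1 ∈ Ico 0 m ∧ p.2 ∈ (1 - p.1 / m) • B}

theorem isBounded_puncturedCone (hB : Bornology.IsBounded B) (m : ℝ) :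
    Bornology.IsBounded (puncturedCone B m) := by
  obtain ⟨C, hC⟩ := hB.exists_norm_le
  have hball : Bornology.IsBounded {y : V | ‖y‖ ≤ C} :=
    isBounded_iff_forall_norm_le.2 ⟨C, fun _ h => h⟩
  refine ((Metric.isBounded_Icc 0 m).prod hball).subset fun p hp => ⟨Ico_subset_Icc_self hp.1, ?_⟩
  obtain ⟨b, hb, hpb⟩ := hp.2
  have hr := one_sub_div_mem_Icc (hp.1.1.trans_lt hp.1.2) (Ico_subset_Icc_self hp.1)
  show ‖p.2‖ ≤ C
  rw [← hpb, norm_smul, Real.norm_of_nonneg hr.1]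
  exact (mul_le_of_le_one_left (norm_nonneg b) hr.2).trans (hC b hb)

variable [MeasurableSpace V] [BorelSpace V] [FiniteDimensional ℝ V]

theorem measurableSet_puncturedCone (hB : MeasurableSet B) (m : ℝ) :
    MeasurableSet (puncturedCone B m) := by
  have : puncturedCone B m = Ico 0 m ×ˢ univ ∩ {p | (1 - p.1 / m)⁻¹ • p.2 ∈ B} := by
    ext p
    simp only [puncturedCone, mem_ofPred_eq, mem_inter_iff, mem_prod, mem_univ, and_true]
    exact and_congr_right fun hs => mem_smul_set_iff_inv_smul_mem₀
      (one_sub_div_pos_of_mem_Ico hs).ne' _ _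
  rw [this]
  refine (measurableSet_Ico.prod MeasurableSet.univ).inter (hB.preimage ?_)
  fun_prop

theorem integral_puncturedCone_slice {E : Type*} [NormedAddCommGroup E] [NormedSpace ℝ E]
    (μ : Measure V) [μ.IsAddHaarMeasure] (hB : MeasurableSet B) (g : ℝ × V → E) (s : ℝ) :
    ∫ y, (puncturedCone B m).indicator g (s, y) ∂μ
      = (Ico 0 m).indicator
          (fun s => (1 - s / m) ^ Module.finrank ℝ V • ∫ b in B, g (s, (1 - s / m) • b) ∂μ) s := by
  by_cases hs : s ∈ Ico 0 m
  · have hr := one_sub_div_pos_of_mem_Ico hs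
    have : (fun y => (puncturedCone B m).indicator g (s, y))
        = ((1 - s / m) • B).indicator fun y => g (s, y) := by
      have hslice : Prod.mk s ⁻¹' puncturedCone B m = (1 - s / m) • B :=
        ext fun y => and_iff_right hs
      ext y
      rw [← hslice]
      exact (indicator_comp_right (Prod.mk s)).symm
    have hscale := Measure.setIntegral_comp_smul_of_pos μ (fun y => g (s, y)) B hr
    rw [this, integral_indicator (hB.const_smul₀ _), indicator_of_mem hs, hscale,
      smul_inv_smul₀ (pow_pos hr _).ne']
  · have : (fun y => (puncturedCone B m).indicator g (s, y)) = 0 := by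
      ext y
      exact indicator_of_notMem (fun h => hs h.1) _
    rw [this, indicator_of_notMem hs, Pi.zero_def, integral_zero]

theorem setIntegral_puncturedCone {E : Type*} [NormedAddCommGroup E] [NormedSpace ℝ E]
    [CompleteSpace E] (μ : Measure V) [μ.IsAddHaarMeasure] (hB : MeasurableSet B) {g : ℝ × V → E}
    (hg : IntegrableOn g (puncturedCone B m) (volume.prod μ)) :
    ∫ p in puncturedCone B m, g p ∂(volume.prod μ)
      = ∫ s in Icc 0 m, (1 - s / m) ^ Module.finrank ℝ V • ∫ b in B, g (s, (1 - s / m) • b) ∂μ := by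
  rw [← integral_indicator (measurableSet_puncturedCone hB m),
    integral_prod _ ((integrable_indicator_iff (measurableSet_puncturedCone hB m)).2 hg)]
  simp_rw [integral_puncturedCone_slice μ hB]
  rw [integral_indicator measurableSet_Ico, integral_Icc_eq_integral_Ico]

end PuncturedCone

section Cone

variable {n : ℕ} {N' : Set (Fin n → ℝ)} {m : ℝ}

def cone (N' : Set (Fin n → ℝ)) (m : ℝ) : Set (Fin (n + 1) → ℝ) :=
  {x | ∃ b ∈ N', ∃ t ∈ Icc (0 : ℝ) 1, x = Fin.snoc (fun j => (1 - t) * b j) (t * m)}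

theorem snoc_mem_cone_iff (hm : 0 < m) {y : Fin n → ℝ} {s : ℝ} :
    Fin.snoc y s ∈ cone N' m ↔ s ∈ Icc 0 m ∧ y ∈ (1 - s / m) • N' := by
  constructor
  · rintro ⟨b, hb, t, ⟨ht0, ht1⟩, h⟩
    obtain ⟨rfl, rfl⟩ := Fin.snoc_inj.1 h
    refine ⟨⟨by positivity, by nlinarith⟩, b, hb, ?_⟩
    rw [mul_div_cancel_right₀ t hm.ne']
    rfl
  · rintro ⟨⟨hs0, hsm⟩, b, hb, rfl⟩
    refine ⟨b, hb, s / m, ⟨by positivity, (div_le_one hm).2 hsm⟩, ?_⟩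
    rw [div_mul_cancel₀ s hm.ne']
    rfl

theorem snoc_preimage_cone_ae_eq (hm : 0 < m) :
    (fun p : ℝ × (Fin n → ℝ) => Fin.snoc p.2 p.1) ⁻¹' cone N' m =ᵐ[volume] puncturedCone N' m := by
  have hsub : puncturedCone N' m ⊆ (fun p : ℝ × (Fin n → ℝ) => Fin.snoc p.2 p.1) ⁻¹' cone N' m :=
    fun p hp => (snoc_mem_cone_iff hm).2 ⟨Ico_subset_Icc_self hp.1, hp.2⟩
  have hapex : (fun p : ℝ × (Fin n → ℝ) => Fin.snoc p.2 p.1) ⁻¹' cone N' m \ puncturedCone N' m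
      ⊆ {m} ×ˢ univ := by
    intro p ⟨hp, hp'⟩
    have hp := (snoc_mem_cone_iff hm).1 hp
    exact ⟨eq_of_le_of_not_lt hp.1.2 fun h => hp' ⟨⟨hp.1.1, h⟩, hp.2⟩, trivial⟩
  refine ae_eq_set.2 ⟨measure_mono_null hapex ?_, by rw [sdiff_eq_empty.2 hsub, measure_empty]⟩
  rw [Measure.volume_eq_prod, Measure.prod_prod, Real.volume_singleton, zero_mul]

theorem setIntegral_cone {E : Type*} [NormedAddCommGroup E] [NormedSpace ℝ E] (hm : 0 < m)
    (f : (Fin (n + 1) → ℝ) → E) :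
    ∫ a in cone N' m, f a
      = ∫ p in puncturedCone N' m, f (Fin.snoc p.2 p.1) ∂(volume.prod volume) := by
  have hsnoc : ⇑(MeasurableEquiv.piFinSuccAbove (fun _ => ℝ) (Fin.last n)).symm
      = fun p : ℝ × (Fin n → ℝ) => Fin.snoc p.2 p.1 := by
    ext p
    simp [MeasurableEquiv.piFinSuccAbove_symm_apply, Fin.insertNthEquiv_last]
  rw [← ((volume_preserving_piFinSuccAbove (fun _ => ℝ) (Fin.last n)).symm _
      ).setIntegral_preimage_emb (MeasurableEquiv.measurableEmbedding _),
    hsnoc, setIntegral_congr_set (snoc_preimage_cone_ae_eq hm), Measure.volume_eq_prod]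

end Cone

section Density

variable {n : ℕ} {X : Fin n → ℝ}

noncomputable def segreDensity (n : ℕ) (X a : Fin n → ℝ) : ℝ :=
  n ! * (∏ i, X i) / (1 + ∑ i, a i * X i) ^ (n + 1)

theorem measurable_segreDensity : Measurable (segreDensity n X) := by
  unfold segreDensity
  fun_prop

theorem norm_segreDensity_le (hX : ∀ i, 0 ≤ X i) {a : Fin n → ℝ} (ha : ∀ i, 0 ≤ a i) :
    ‖segreDensity n X a‖ ≤ n ! * ∏ i, X i := by
  have hC : 0 ≤ (n ! : ℝ) * ∏ i, X i :=
    mul_nonneg (Nat.cast_nonneg _) (Finset.prod_nonneg fun i _ => hX i)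
  have hsum : 0 ≤ ∑ i, a i * X i := Finset.sum_nonneg fun i _ => mul_nonneg (ha i) (hX i)
  rw [segreDensity, Real.norm_of_nonneg (div_nonneg hC (pow_nonneg (by linarith) _))]
  exact div_le_self hC (one_le_pow₀ (by linarith))

theorem segreDensity_snoc_smul (X : Fin (n + 1) → ℝ) (r s : ℝ) (b : Fin n → ℝ) :
    segreDensity (n + 1) X (Fin.snoc (r • b) s)
      = (n + 1)! * (∏ i, X i) /
          (1 + r * ∑ j, b j * X j.castSucc + s * X (Fin.last n)) ^ (n + 2) := by
  simp only [segreDensity, Fin.sum_univ_castSucc, Fin.snoc_castSucc, Fin.snoc_last, Pi.smul_apply,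
    smul_eq_mul, Finset.mul_sum, mul_assoc, add_assoc]

theorem integral_segreDensity_snoc {X : Fin (n + 1) → ℝ} (hX : ∀ i, 0 ≤ X i) {m : ℝ} (hm : 0 < m)
    {b : Fin n → ℝ} (hb : ∀ j, 0 ≤ b j) :
    ∫ s in Icc 0 m, (1 - s / m) ^ n * segreDensity (n + 1) X (Fin.snoc ((1 - s / m) • b) s)
      = m * X (Fin.last n) / (1 + m * X (Fin.last n)) *
          segreDensity n (fun j => X j.castSucc) b := by
  have hS : 0 ≤ ∑ j, b j * X j.castSucc := Finset.sum_nonneg fun j _ => mul_nonneg (hb j) (hX _)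
  have hA : 0 < 1 + m * X (Fin.last n) := by have := hX (Fin.last n); positivity
  simp_rw [segreDensity_snoc_smul, mul_div_left_comm _ ((n + 1)! * _ : ℝ)]
  rw [integral_const_mul, integral_Icc_one_sub_div_pow_div_pow n hm hS (hX _), segreDensity,
    Fin.prod_univ_castSucc, Nat.factorial_succ]
  push_cast
  field_simp

end Density

section Integrability

variable {n : ℕ} {X : Fin (n + 1) → ℝ} {N' : Set (Fin n → ℝ)}

theorem snoc_nonneg {y : Fin n → ℝ} {s : ℝ} (hy : ∀ j, 0 ≤ y j) (hs : 0 ≤ s) :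
    ∀ i, 0 ≤ (Fin.snoc y s : Fin (n + 1) → ℝ) i :=
  Fin.lastCases (by simpa using hs) fun j => by simpa using hy j

theorem integrableOn_segreDensity_puncturedCone (hX : ∀ i, 0 ≤ X i) (hmeas : MeasurableSet N')
    (hbdd : Bornology.IsBounded N') (hpos : ∀ b ∈ N', ∀ i, 0 ≤ b i) (m : ℝ) :
    IntegrableOn (fun p : ℝ × (Fin n → ℝ) => segreDensity (n + 1) X (Fin.snoc p.2 p.1))
      (puncturedCone N' m) (volume.prod volume) := by
  refine Measure.integrableOn_of_bounded (isBounded_puncturedCone hbdd m).measure_lt_top.ne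
    (measurable_segreDensity.comp
      (continuous_snd.finSnoc continuous_fst).measurable).aestronglyMeasurable
    (ae_restrict_of_forall_mem (measurableSet_puncturedCone hmeas m) fun p hp =>
      norm_segreDensity_le hX (snoc_nonneg ?_ hp.1.1))
  obtain ⟨b, hb, hpb⟩ := hp.2
  intro j
  rw [← hpb]
  exact mul_nonneg (one_sub_div_pos_of_mem_Ico hp.1).le (hpos b hb j)

theorem integrable_segreDensity_snoc_smul (hX : ∀ i, 0 ≤ X i) (hmeas : MeasurableSet N')
    (hbdd : Bornology.IsBounded N') (hpos : ∀ b ∈ N', ∀ i, 0 ≤ b i) {m : ℝ} (hm : 0 < m) :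
    Integrable (Function.uncurry fun s b =>
        (1 - s / m) ^ n * segreDensity (n + 1) X (Fin.snoc ((1 - s / m) • b) s))
      ((volume.restrict (Icc 0 m)).prod (volume.restrict N')) := by
  rw [Measure.prod_restrict]
  have hfin : (volume.prod volume) (Icc 0 m ×ˢ N') ≠ ⊤ := by
    rw [Measure.prod_prod]
    exact ENNReal.mul_ne_top measure_Icc_lt_top.ne hbdd.measure_lt_top.ne
  have hf : Measurable (Function.uncurry fun s b =>
      (1 - s / m) ^ n * segreDensity (n + 1) X (Fin.snoc ((1 - s / m) • b) s)) :=
    (by fun_prop : Measurable fun p : ℝ × (Fin n → ℝ) => (1 - p.1 / m) ^ n).mul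
      (measurable_segreDensity.comp
        (((continuous_const.sub (continuous_fst.div_const m)).smul continuous_snd).finSnoc
          continuous_fst).measurable)
  refine Measure.integrableOn_of_bounded (M := (n + 1)! * ∏ i, X i) hfin hf.aestronglyMeasurable
    (ae_restrict_of_forall_mem (measurableSet_Icc.prod hmeas) ?_)
  rintro ⟨s, b⟩ ⟨hs, hb⟩
  have hr : 1 - s / m ∈ Icc 0 1 := one_sub_div_mem_Icc hm hs
  rw [Function.uncurry_apply_pair, norm_mul, norm_pow, Real.norm_of_nonneg hr.1]
  exact (mul_le_of_le_one_left (norm_nonneg _) (pow_le_one₀ hr.1 hr.2)).trans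
    (norm_segreDensity_le hX (snoc_nonneg (fun j => mul_nonneg hr.1 (hpos b hb j)) hs.1))

end Integrability

theorem cone_integral_general (n : ℕ)
    (N' : Set (Fin n → ℝ)) (hmeas : MeasurableSet N')
    (hbdd : Bornology.IsBounded N') (hpos : ∀ b ∈ N', ∀ i, 0 ≤ b i)
    (m : ℝ) (hm : 0 < m)
    (X : Fin (n + 1) → ℝ) (hX : ∀ i, 0 < X i) :
    ∫ a in {x : Fin (n + 1) → ℝ | ∃ b ∈ N', ∃ t ∈ Set.Icc (0:ℝ) 1,
        x = Fin.snoc (fun j => (1 - t) * b j) (t * m)},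
      (Nat.factorial (n + 1) : ℝ) * (∏ i, X i) /
        (1 + ∑ i, a i * X i) ^ (n + 2) ∂volume
    = (m * X (Fin.last n) / (1 + m * X (Fin.last n))) *
      ∫ b in N', (Nat.factorial n : ℝ) * (∏ j, X (Fin.castSucc j)) /
        (1 + ∑ j, b j * X (Fin.castSucc j)) ^ (n + 1) ∂volume := by
  have hX' : ∀ i, 0 ≤ X i := fun i => (hX i).le
  change ∫ a in cone N' m, segreDensity (n + 1) X a = m * X (Fin.last n) / (1 + m * X (Fin.last n))
    * ∫ b in N', segreDensity n (fun j => X j.castSucc) b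
  rw [setIntegral_cone hm, setIntegral_puncturedCone volume hmeas
    (integrableOn_segreDensity_puncturedCone hX' hmeas hbdd hpos m), Module.finrank_fin_fun]
  simp_rw [smul_eq_mul, ← integral_const_mul]
  rw [integral_integral_swap (integrable_segreDensity_snoc_smul hX' hmeas hbdd hpos hm)]
  exact setIntegral_congr_fun hmeas fun b hb => integral_segreDensity_snoc hX' hm (hpos b hb)

theorem cone_integral (n : ℕ) (hn : 1 ≤ n)
    (N' : Set (Fin n → ℝ)) (hmeas : MeasurableSet N')
    (hbdd : Bornology.IsBounded N') (hpos : ∀ b ∈ N', ∀ i, 0 ≤ b i)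
    (m : ℝ) (hm : 0 < m)
    (X : Fin (n + 1) → ℝ) (hX : ∀ i, 0 < X i) :
    ∫ a in {x : Fin (n + 1) → ℝ | ∃ b ∈ N', ∃ t ∈ Set.Icc (0:ℝ) 1,
        x = Fin.snoc (fun j => (1 - t) * b j) (t * m)},
      (Nat.factorial (n + 1) : ℝ) * (∏ i, X i) /
        (1 + ∑ i, a i * X i) ^ (n + 2) ∂volume
    = (m * X (Fin.last n) / (1 + m * X (Fin.last n))) *
      ∫ b in N', (Nat.factorial n : ℝ) * (∏ j, X (Fin.castSucc j)) /
        (1 + ∑ j, b j * X (Fin.castSucc j)) ^ (n + 1) ∂volume :=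
  cone_integral_general n N' hmeas hbdd hpos m hm X hX
end

section
/- Let n ≥ 1 and let X_1, ..., X_n be indeterminates. For i = (i_1,...,i_n) with nonnegative integer entries, the identity 1 − 1/(1 + i_1 X_1 + ⋯ + i_n X_n) = (i_1 X_1 + ⋯ + i_n X_n)/(1 + i_1 X_1 + ⋯ + i_n X_n) holds in the field of rational functions, and consequently the integral of n! X_1⋯X_n/(1+a·X)^{n+1} over ℝ_{≥0}^n minus the translated orthant {a : a_j ≥ i_j ∀j} equals (i_1 X_1 + ⋯ + i_n X_n)/(1 + i_1 X_1 + ⋯ + i_n X_n) when X_1,...,X_n are positive reals. -/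
open MeasureTheory Set Filter Topology
open scoped Nat

/-!
The function `orthantDensity c X a = n! ∏ X / (c + a·X)^(n+1)` has total mass `1/c` on the
orthant `a ≥ 0`, by induction on `n`: since `∫₀^∞ dt / (d + t X₀)^(n+2) = 1 / ((n+1) X₀ d^(n+1))`,
integrating out the first coordinate turns the density in dimension `n + 1` into the density in
dimension `n` with the same `c`. Translating by `p` replaces `c` by `c + p·X`, so the orthant
`a ≥ I` has mass `1/(1 + I·X)`, and its complement in `a ≥ 0` has mass `1 - 1/(1 + I·X)`.
-/
theorem hasDerivAt_neg_inv_pow_affine (k : ℕ) {d Y t : ℝ} (hY : Y ≠ 0) (ht : d + t * Y ≠ 0) :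
    HasDerivAt (fun t => -((k + 1) * Y * (d + t * Y) ^ (k + 1))⁻¹)
      (1 / (d + t * Y) ^ (k + 2)) t := by
  have hlin : HasDerivAt (fun t => d + t * Y) Y t := by
    simpa using ((hasDerivAt_id t).mul_const Y).const_add d
  have hk : (k : ℝ) + 1 ≠ 0 := k.cast_add_one_ne_zero
  have := ((hlin.fun_pow (k + 1)).const_mul ((k + 1) * Y)).fun_inv
    (mul_ne_zero (mul_ne_zero hk hY) (pow_ne_zero _ ht))
  refine this.fun_neg.congr_deriv ?_
  rw [Nat.add_sub_cancel]
  generalize d + t * Y = u at ht ⊢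
  push_cast
  field_simp
  ring

theorem lintegral_Ici_one_div_pow_affine (k : ℕ) {d Y : ℝ} (hd : 0 < d) (hY : 0 < Y) :
    ∫⁻ t in Ici 0, ENNReal.ofReal (1 / (d + t * Y) ^ (k + 2))
      = ENNReal.ofReal (1 / ((k + 1) * Y * d ^ (k + 1))) := by
  have hpos : ∀ t ∈ Ici (0 : ℝ), 0 < d + t * Y := fun t ht => by
    have := mul_nonneg ht hY.le
    linarith
  have hderiv : ∀ t ∈ Ici (0 : ℝ), HasDerivAt (fun t => -((k + 1) * Y * (d + t * Y) ^ (k + 1))⁻¹)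
      (1 / (d + t * Y) ^ (k + 2)) t := fun t ht =>
    hasDerivAt_neg_inv_pow_affine k hY.ne' (hpos t ht).ne'
  have hnonneg : ∀ t ∈ Ioi (0 : ℝ), 0 ≤ 1 / (d + t * Y) ^ (k + 2) := fun t ht => by
    have := hpos t (mem_Ici.2 ht.le)
    positivity
  have hlim : Tendsto (fun t => -((k + 1) * Y * (d + t * Y) ^ (k + 1))⁻¹) atTop (𝓝 0) := by
    have : Tendsto (fun t => (k + 1) * Y * (d + t * Y) ^ (k + 1)) atTop atTop :=
      ((tendsto_pow_atTop k.succ_ne_zero).comp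
        (tendsto_atTop_add_const_left _ d (tendsto_id.atTop_mul_const hY))).const_mul_atTop
        (by positivity)
    simpa using this.inv_tendsto_atTop.neg
  rw [← restrict_Ioi_eq_restrict_Ici, ← ofReal_integral_eq_lintegral_ofReal
    (integrableOn_Ioi_deriv_of_nonneg' hderiv hnonneg hlim) ((ae_restrict_iff' measurableSet_Ioi).2
    (Eventually.of_forall hnonneg)), integral_Ioi_of_hasDerivAt_of_nonneg' hderiv hnonneg hlim]
  congr 1
  simp

noncomputable def orthantDensity {n : ℕ} (c : ℝ) (X a : Fin n → ℝ) : ℝ :=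
  n ! * (∏ i, X i) / (c + ∑ i, a i * X i) ^ (n + 1)

theorem measurable_orthantDensity {n : ℕ} (c : ℝ) (X : Fin n → ℝ) :
    Measurable (orthantDensity c X) := by
  unfold orthantDensity; fun_prop

theorem orthantDensity_nonneg {n : ℕ} {c : ℝ} {X a : Fin n → ℝ} (hX : ∀ i, 0 < X i)
    (ha : 0 ≤ c + ∑ i, a i * X i) : 0 ≤ orthantDensity c X a :=
  div_nonneg (mul_nonneg (Nat.cast_nonneg _) (Finset.prod_nonneg fun i _ => (hX i).le))
    (pow_nonneg ha _)

theorem lintegral_Ici_orthantDensity_cons {n : ℕ} {c : ℝ} {X : Fin (n + 1) → ℝ}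
    (hX : ∀ i, 0 < X i) {a : Fin n → ℝ} (ha : 0 < c + ∑ j, a j * Fin.tail X j) :
    ∫⁻ t in Ici 0, ENNReal.ofReal (orthantDensity c X (Fin.cons t a))
      = ENNReal.ofReal (orthantDensity c (Fin.tail X) a) := by
  set d := c + ∑ j, a j * Fin.tail X j
  have hK : 0 ≤ ((n + 1)! * ∏ i, X i : ℝ) :=
    mul_nonneg (Nat.cast_nonneg _) (Finset.prod_nonneg fun i _ => (hX i).le)
  have hsplit : ∀ t, orthantDensity c X (Fin.cons t a)
      = ((n + 1)! * ∏ i, X i) * (1 / (d + t * X 0) ^ (n + 2)) := by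
    intro t
    simp only [orthantDensity, Fin.sum_univ_succ, Fin.cons_zero, Fin.cons_succ, d, Fin.tail]
    ring
  simp_rw [hsplit, ENNReal.ofReal_mul hK]
  rw [lintegral_const_mul' _ _ ENNReal.ofReal_ne_top,
    lintegral_Ici_one_div_pow_affine n ha (hX 0), ← ENNReal.ofReal_mul hK]
  congr 1
  simp only [orthantDensity, Fin.prod_univ_succ, Nat.factorial_succ, d, Fin.tail]
  have := (hX 0).ne'
  push_cast
  field_simp

theorem lintegral_Ici_zero_orthantDensity {n : ℕ} {c : ℝ} (hc : 0 < c) {X : Fin n → ℝ}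
    (hX : ∀ i, 0 < X i) :
    ∫⁻ a in Ici 0, ENNReal.ofReal (orthantDensity c X a) = ENNReal.ofReal (1 / c) := by
  induction n generalizing c with
  | zero =>
    simp [orthantDensity, Set.Ici, volume_pi]
  | succ n ih =>
    set e := MeasurableEquiv.piFinSuccAbove (fun _ => ℝ) 0
    have hpre : e.symm ⁻¹' Ici 0 = Ici (0 : ℝ) ×ˢ Ici (0 : Fin n → ℝ) := by
      ext ⟨t, a⟩
      simp [e, Pi.le_def, Fin.forall_fin_succ]
    rw [← (volume_preserving_piFinSuccAbove (fun _ => ℝ) 0).symm.setLIntegral_comp_preimage_emb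
      e.symm.measurableEmbedding, hpre, Measure.volume_eq_prod,
      setLIntegral_prod_symm (fun p => ENNReal.ofReal (orthantDensity c X (e.symm p)))
        ((measurable_orthantDensity c X).comp e.symm.measurable).ennreal_ofReal.aemeasurable,
      ← ih hc (X := Fin.tail X) fun j => hX _]
    refine setLIntegral_congr_fun measurableSet_Ici fun a ha => ?_
    simp only [e, MeasurableEquiv.piFinSuccAbove_symm_apply, Fin.insertNthEquiv_zero]
    exact lintegral_Ici_orthantDensity_cons hX
      (add_pos_of_pos_of_nonneg hc (Finset.sum_nonneg fun j _ => mul_nonneg (ha j) (hX _).le))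

theorem lintegral_Ici_orthantDensity {n : ℕ} {c : ℝ} {X : Fin n → ℝ} (hX : ∀ i, 0 < X i)
    {p : Fin n → ℝ} (hp : 0 < c + ∑ i, p i * X i) :
    ∫⁻ a in Ici p, ENNReal.ofReal (orthantDensity c X a)
      = ENNReal.ofReal (1 / (c + ∑ i, p i * X i)) := by
  have hshift : ∀ a, orthantDensity c X (a + p) = orthantDensity (c + ∑ i, p i * X i) X a := by
    intro a
    simp only [orthantDensity, Pi.add_apply, add_mul, Finset.sum_add_distrib]
    ring_nf
  rw [← (measurePreserving_add_right volume p).setLIntegral_comp_preimage_emb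
    (measurableEmbedding_addRight p), preimage_add_const_Ici, sub_self]
  simp_rw [hshift]
  exact lintegral_Ici_zero_orthantDensity hp hX

theorem integrable_and_integral_eq_of_lintegral_ofReal_eq {α : Type*} [MeasurableSpace α]
    {μ : Measure α} {f : α → ℝ} (hf : AEStronglyMeasurable f μ) (hnonneg : 0 ≤ᵐ[μ] f)
    {r : ℝ} (hr : 0 ≤ r) (h : ∫⁻ x, ENNReal.ofReal (f x) ∂μ = ENNReal.ofReal r) :
    Integrable f μ ∧ ∫ x, f x ∂μ = r :=
  ⟨⟨hf, (hasFiniteIntegral_iff_ofReal hnonneg).2 (h ▸ ENNReal.ofReal_lt_top)⟩,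
    by rw [integral_eq_lintegral_of_nonneg_ae hnonneg hf, h, ENNReal.toReal_ofReal hr]⟩

theorem integrableOn_and_setIntegral_Ici_orthantDensity {n : ℕ} {c : ℝ} {X : Fin n → ℝ}
    (hX : ∀ i, 0 < X i) {p : Fin n → ℝ} (hp : 0 < c + ∑ i, p i * X i) :
    IntegrableOn (orthantDensity c X) (Ici p)
      ∧ ∫ a in Ici p, orthantDensity c X a = 1 / (c + ∑ i, p i * X i) := by
  have hnonneg : ∀ a ∈ Ici p, 0 ≤ orthantDensity c X a := fun a ha =>
    orthantDensity_nonneg hX (hp.le.trans (add_le_add_right (Finset.sum_le_sum fun i _ =>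
      mul_le_mul_of_nonneg_right (ha i) (hX i).le) c))
  exact integrable_and_integral_eq_of_lintegral_ofReal_eq
    (measurable_orthantDensity c X).aestronglyMeasurable
    ((ae_restrict_iff' measurableSet_Ici).2 (Eventually.of_forall hnonneg)) (by positivity)
    (lintegral_Ici_orthantDensity hX hp)

theorem principal_monomial_general (n : ℕ) (X : Fin n → ℝ) (hX : ∀ i, 0 < X i)
    (I : Fin n → ℝ) (hI : ∀ j, 0 ≤ I j) :
    (1 - 1 / (1 + ∑ j, I j * X j)
      = (∑ j, I j * X j) / (1 + ∑ j, I j * X j)) ∧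
    ∫ a in {a : Fin n → ℝ | ∀ i, 0 ≤ a i} \ {a : Fin n → ℝ | ∀ j, I j ≤ a j},
      (Nat.factorial n : ℝ) * (∏ i, X i) / (1 + ∑ i, a i * X i) ^ (n + 1) ∂volume
    = (∑ j, I j * X j) / (1 + ∑ j, I j * X j) := by
  have hS : 0 ≤ ∑ j, I j * X j := Finset.sum_nonneg fun j _ => mul_nonneg (hI j) (hX j).le
  have hquot : 1 - 1 / (1 + ∑ j, I j * X j) = (∑ j, I j * X j) / (1 + ∑ j, I j * X j) := by
    field_simp
    ring
  refine ⟨hquot, ?_⟩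
  obtain ⟨hint, horthant⟩ :=
    integrableOn_and_setIntegral_Ici_orthantDensity hX (c := 1) (p := 0) (by simp)
  obtain ⟨-, hshifted⟩ :=
    integrableOn_and_setIntegral_Ici_orthantDensity hX (c := 1) (p := I) (by positivity)
  -- in the pointwise order of `Fin n → ℝ` the two sets are `Ici 0` and `Ici I`
  change ∫ a in Ici 0 \ Ici I, orthantDensity 1 X a = _
  rw [setIntegral_sdiff measurableSet_Ici hint (Ici_subset_Ici.2 hI), horthant, hshifted, ← hquot]
  simp

theorem principal_monomial (n : ℕ) (hn : 0 < n) (X : Fin n → ℝ) (hX : ∀ i, 0 < X i)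
    (I : Fin n → ℝ) (hI : ∀ j, 0 ≤ I j) :
    (1 - 1 / (1 + ∑ j, I j * X j)
      = (∑ j, I j * X j) / (1 + ∑ j, I j * X j)) ∧
    ∫ a in {a : Fin n → ℝ | ∀ i, 0 ≤ a i} \ {a : Fin n → ℝ | ∀ j, I j ≤ a j},
      (Nat.factorial n : ℝ) * (∏ i, X i) / (1 + ∑ i, a i * X i) ^ (n + 1) ∂volume
    = (∑ j, I j * X j) / (1 + ∑ j, I j * X j) :=
  principal_monomial_general n X hX I hI
end
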